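/- arXiv:1601.05776 — 8 statements merged into one kernel-verified Lean document; each statement's English description precedes it below -/
import Mathlib

section
/- For every layered Gaussian relay network with an even number L ≥ 2 of relay layers and N ≥ 2 relays per layer, there exists a choice of relays i₁,…,i_L (one per layer) such that the single-path capacity satisfies C(i₁,…,i_L) ≥ (2/(LN + 2))·C̄ − 4·log₂(N), where C̄ is the approximate network capacity. -/
open scoped BigOperators

/-- Capacity of a Gaussian MIMO channel with channel matrix `G` and independent
unit-power inputs: `log₂ det(I + G Gᴴ)`. -/
noncomputable def mimoCap {n m : Type*} [Fintype n] [Fintype m] [DecidableEq n]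
    (G : Matrix n m ℂ) : ℝ :=
  Real.logb 2 (Matrix.det (1 + G * G.conjTranspose)).re

/-- Value of the cut `Y = (y 0, …, y (L-1))` in a layered Gaussian relay network with
`L` relay layers of `N` relays each, source-side gains `h0`, middle matrices
`Hm 1, …, Hm (L-1)` (entry `(j,i)` is the gain from relay `(l,i)` to relay `(l+1,j)`),
and destination-side gains `hLv`. -/
noncomputable def cutValue (L N : ℕ) (h0 : Fin N → ℂ)
    (Hm : ℕ → Matrix (Fin N) (Fin N) ℂ) (hLv : Fin N → ℂ)
    (y : ℕ → Finset (Fin N)) : ℝ :=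
  mimoCap (Matrix.of (fun (j : {x : Fin N // x ∈ (y 0)ᶜ}) (_ : Fin 1) => h0 j.1))
    + ∑ k ∈ Finset.range (L - 1),
        mimoCap ((Hm (k + 1)).submatrix
          (fun j : {x : Fin N // x ∈ (y (k + 1))ᶜ} => (j : Fin N))
          (fun i : {x : Fin N // x ∈ y k} => (i : Fin N)))
    + Real.logb 2 (1 + ∑ i ∈ y (L - 1), ‖hLv i‖ ^ 2)

/-- The approximate network capacity `C̄`: the minimum cut value. -/
noncomputable def approxCap (L N : ℕ) (h0 : Fin N → ℂ)
    (Hm : ℕ → Matrix (Fin N) (Fin N) ℂ) (hLv : Fin N → ℂ) : ℝ :=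
  sInf {c : ℝ | ∃ y : ℕ → Finset (Fin N), c = cutValue L N h0 Hm hLv y}

/-- Capacity of the single-path subnetwork choosing relay `i l` in layer `l+1`:
the minimum of the `L+1` link capacities along the path. -/
noncomputable def pathCap (L N : ℕ) (h0 : Fin N → ℂ)
    (Hm : ℕ → Matrix (Fin N) (Fin N) ℂ) (hLv : Fin N → ℂ)
    (i : ℕ → Fin N) : ℝ :=
  (Finset.range (L + 1)).inf' ⟨0, by simp⟩ (fun t =>
    if t = 0 then Real.logb 2 (1 + ‖h0 (i 0)‖ ^ 2)
    else if t = L then Real.logb 2 (1 + ‖hLv (i (L - 1))‖ ^ 2)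
    else Real.logb 2 (1 + ‖Hm t (i t) (i (t - 1))‖ ^ 2))

/-! ### Auxiliary lemmas -/

section Aux

open scoped ComplexOrder

lemma re_det_one_add_bounds {m : Type*} [Fintype m] [DecidableEq m] (A : Matrix m m ℂ)
    (hA : A.PosSemidef) :
    0 ≤ (Matrix.det (1 + A)).re ∧
      (Matrix.det (1 + A)).re ≤ ((Fintype.card m : ℝ) + A.trace.re) ^ (Fintype.card m) := by
  have h1 : (1 + A).PosSemidef := Matrix.PosSemidef.add (Matrix.PosSemidef.one) hA
  have hH1 := h1.isHermitian
  have hdet : Matrix.det (1 + A) = ((∏ i, hH1.eigenvalues i : ℝ) : ℂ) := by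
    rw [hH1.det_eq_prod_eigenvalues]; push_cast; rfl
  have hre : (Matrix.det (1 + A)).re = ∏ i, hH1.eigenvalues i := by
    rw [hdet, Complex.ofReal_re]
  have hev0 : ∀ i, 0 ≤ hH1.eigenvalues i := h1.eigenvalues_nonneg
  have htr : (1 + A).trace = ((∑ i, hH1.eigenvalues i : ℝ) : ℂ) := by
    rw [hH1.trace_eq_sum_eigenvalues]
    push_cast; rfl
  have hsum : ∑ i, hH1.eigenvalues i = (Fintype.card m : ℝ) + A.trace.re := by
    have := congrArg Complex.re htr
    rw [Complex.ofReal_re] at this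
    rw [← this, Matrix.trace_add, Matrix.trace_one]
    simp
  constructor
  · rw [hre]; exact Finset.prod_nonneg fun i _ => hev0 i
  · rw [hre]
    calc ∏ i, hH1.eigenvalues i ≤ ∏ _i : m, ((Fintype.card m : ℝ) + A.trace.re) := by
          apply Finset.prod_le_prod (fun i _ => hev0 i)
          intro i _
          rw [← hsum]
          exact Finset.single_le_sum (fun j _ => hev0 j) (Finset.mem_univ i)
      _ = ((Fintype.card m : ℝ) + A.trace.re) ^ (Fintype.card m) := by
          rw [Finset.prod_const, Finset.card_univ]

lemma mimoCap_conjTranspose {n m : Type*} [Fintype n] [Fintype m] [DecidableEq n] [DecidableEq m]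
    (G : Matrix n m ℂ) : mimoCap G.conjTranspose = mimoCap G := by
  unfold mimoCap
  rw [Matrix.conjTranspose_conjTranspose, Matrix.det_one_add_mul_comm]

lemma mimoCap_le {n m : Type*} [Fintype n] [Fintype m] [DecidableEq n] [DecidableEq m]
    (G : Matrix n m ℂ) {B : ℝ} (hB : 0 ≤ B)
    (hG : ∀ i j, ‖G i j‖ ^ 2 ≤ B) {N : ℕ}
    (hn : Fintype.card n ≤ N) (hm : Fintype.card m ≤ N) (hN : 1 ≤ N) :
    mimoCap G ≤ (Fintype.card m : ℝ) * Real.logb 2 ((N : ℝ) ^ 2 * (1 + B)) := by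
  have hPSD : (G.conjTranspose * G).PosSemidef := Matrix.posSemidef_conjTranspose_mul_self G
  have hdet : Matrix.det (1 + G * G.conjTranspose) = Matrix.det (1 + G.conjTranspose * G) :=
    Matrix.det_one_add_mul_comm G G.conjTranspose
  obtain ⟨h0, hle⟩ := re_det_one_add_bounds _ hPSD
  have htre : (G.conjTranspose * G).trace.re = ∑ j : m, ∑ i : n, ‖G i j‖ ^ 2 := by
    have h1 : (G.conjTranspose * G).trace = ∑ j, ∑ i, (starRingEnd ℂ) (G i j) * G i j := by
      simp [Matrix.trace, Matrix.diag, Matrix.mul_apply, Matrix.conjTranspose_apply]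
    rw [h1, Complex.re_sum]
    refine Finset.sum_congr rfl fun j _ => ?_
    rw [Complex.re_sum]
    refine Finset.sum_congr rfl fun i _ => ?_
    rw [← Complex.normSq_eq_conj_mul_self, ← Complex.sq_norm]
    simp [← Complex.ofReal_pow]
  have htr0 : 0 ≤ (G.conjTranspose * G).trace.re := by
    rw [htre]
    exact Finset.sum_nonneg fun j _ => Finset.sum_nonneg fun i _ => by positivity
  have htr : (G.conjTranspose * G).trace.re ≤ (Fintype.card m : ℝ) * (Fintype.card n : ℝ) * B := by
    rw [htre]
    calc ∑ j : m, ∑ i : n, ‖G i j‖ ^ 2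
        ≤ ∑ _j : m, ∑ _i : n, B := by
          exact Finset.sum_le_sum fun j _ => Finset.sum_le_sum fun i _ => hG i j
      _ = (Fintype.card m : ℝ) * (Fintype.card n : ℝ) * B := by
          simp [Finset.sum_const, Finset.card_univ, mul_assoc]
  have hbase : (1:ℝ) ≤ (N : ℝ) ^ 2 * (1 + B) := by
    have hN1 : (1:ℝ) ≤ (N:ℝ) := by exact_mod_cast hN
    nlinarith
  have hpow : (Matrix.det (1 + G * G.conjTranspose)).re
      ≤ ((N : ℝ) ^ 2 * (1 + B)) ^ (Fintype.card m) := by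
    rw [hdet]
    refine hle.trans (pow_le_pow_left₀ (by positivity) ?_ _)
    have hm' : (Fintype.card m : ℝ) ≤ N := by exact_mod_cast hm
    have hn' : (Fintype.card n : ℝ) ≤ N := by exact_mod_cast hn
    have hN1 : (1:ℝ) ≤ (N:ℝ) := by exact_mod_cast hN
    have hcm : (0:ℝ) ≤ Fintype.card m := by positivity
    have hcn : (0:ℝ) ≤ Fintype.card n := by positivity
    nlinarith [htr, mul_le_mul hm' hn' hcn (by linarith : (0:ℝ) ≤ (N:ℝ))]
  unfold mimoCap
  rw [hdet, ← Real.logb_pow]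
  by_cases hd : (Matrix.det (1 + G.conjTranspose * G)).re ≤ 1
  · refine (Real.logb_nonpos one_lt_two h0 hd).trans ?_
    exact Real.logb_nonneg one_lt_two (one_le_pow₀ hbase)
  · push_neg at hd
    exact Real.logb_le_logb_of_le one_lt_two (by linarith) (hdet ▸ hpow)

lemma mimoCap_le' {n m : Type*} {iFn : Fintype n} {iFm : Fintype m} {iDn : DecidableEq n}
    (G : Matrix n m ℂ) {B : ℝ} (hB : 0 ≤ B)
    (hG : ∀ i j, ‖G i j‖ ^ 2 ≤ B) {N : ℕ}
    (hn : @Fintype.card n iFn ≤ N) (hm : @Fintype.card m iFm ≤ N) (hN : 1 ≤ N) :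
    @mimoCap n m iFn iFm iDn G
      ≤ ((@Fintype.card m iFm : ℕ) : ℝ) * Real.logb 2 ((N : ℝ) ^ 2 * (1 + B)) := by
  letI := iFn
  letI := iFm
  letI := iDn
  letI : DecidableEq m := Classical.decEq m
  exact mimoCap_le G hB hG hn hm hN

lemma mimoCap_conjTranspose' {n m : Type*} {iFn : Fintype n} {iFm : Fintype m}
    {iDn : DecidableEq n} [iDm : DecidableEq m] (G : Matrix n m ℂ) :
    @mimoCap m n iFm iFn iDm G.conjTranspose = @mimoCap n m iFn iFm iDn G := by
  letI := iFn
  letI := iFm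
  letI := iDn
  exact mimoCap_conjTranspose G

end Aux

open scoped Classical in
noncomputable def Rset (N : ℕ) (h0 : Fin N → ℂ) (Hm : ℕ → Matrix (Fin N) (Fin N) ℂ)
    (P : ℝ) : ℕ → Finset (Fin N)
  | 0 => Finset.univ.filter fun j => P < Real.logb 2 (1 + ‖h0 j‖ ^ 2)
  | (l + 1) => Finset.univ.filter fun j =>
      ∃ i ∈ Rset N h0 Hm P l, P < Real.logb 2 (1 + ‖Hm (l + 1) j i‖ ^ 2)

lemma mem_Rset_zero {N : ℕ} {h0 : Fin N → ℂ} {Hm : ℕ → Matrix (Fin N) (Fin N) ℂ} {P : ℝ}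
    {j : Fin N} : j ∈ Rset N h0 Hm P 0 ↔ P < Real.logb 2 (1 + ‖h0 j‖ ^ 2) := by
  simp [Rset]

lemma mem_Rset_succ {N : ℕ} {h0 : Fin N → ℂ} {Hm : ℕ → Matrix (Fin N) (Fin N) ℂ} {P : ℝ}
    {l : ℕ} {j : Fin N} : j ∈ Rset N h0 Hm P (l + 1) ↔
      ∃ i ∈ Rset N h0 Hm P l, P < Real.logb 2 (1 + ‖Hm (l + 1) j i‖ ^ 2) := by
  simp [Rset]

lemma Rset_path {N : ℕ} (h0 : Fin N → ℂ) (Hm : ℕ → Matrix (Fin N) (Fin N) ℂ) (P : ℝ) :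
    ∀ l (j : Fin N), j ∈ Rset N h0 Hm P l → ∃ c : ℕ → Fin N, c l = j ∧
      (P < Real.logb 2 (1 + ‖h0 (c 0)‖ ^ 2)) ∧
      ∀ t, 1 ≤ t → t ≤ l → P < Real.logb 2 (1 + ‖Hm t (c t) (c (t - 1))‖ ^ 2) := by
  intro l
  induction l with
  | zero =>
    intro j hj
    exact ⟨fun _ => j, rfl, mem_Rset_zero.1 hj, fun t ht1 ht2 => absurd (ht1.trans ht2) (by omega)⟩
  | succ l ih =>
    intro j hj
    obtain ⟨i, hi, hedge⟩ := mem_Rset_succ.1 hj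
    obtain ⟨c, hcl, hc0, hct⟩ := ih i hi
    refine ⟨Function.update c (l + 1) j, Function.update_self _ _ _, ?_, ?_⟩
    · rwa [Function.update_of_ne (by omega)]
    · intro t ht1 ht2
      rcases eq_or_lt_of_le ht2 with h | h
      · subst h
        rw [Function.update_self, Nat.add_sub_cancel, Function.update_of_ne (by omega), hcl]
        exact hedge
      · rw [Function.update_of_ne (by omega), Function.update_of_ne (by omega)]
        exact hct t ht1 (by omega)

lemma pathCap_congr (L N : ℕ) (h0 : Fin N → ℂ) (Hm : ℕ → Matrix (Fin N) (Fin N) ℂ)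
    (hLv : Fin N → ℂ) (hL : 1 ≤ L) {i i' : ℕ → Fin N} (h : ∀ t, t < L → i t = i' t) :
    pathCap L N h0 Hm hLv i = pathCap L N h0 Hm hLv i' := by
  unfold pathCap
  refine Finset.inf'_congr _ rfl fun t ht => ?_
  rw [Finset.mem_range] at ht
  by_cases ht0 : t = 0
  · simp [ht0, h 0 (by omega)]
  · by_cases htL : t = L
    · have hL0 : ¬ L = 0 := by omega
      simp [ht0, htL, hL0, h (L - 1) (by omega)]
    · simp only [if_neg ht0, if_neg htL]
      rw [h t (by omega), h (t - 1) (by omega)]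

lemma pair_sum {T : ℕ → ℝ} {a b : ℝ} (m : ℕ) (hm : 1 ≤ m)
    (hT0 : T 0 ≤ a) (hpair : ∀ j, T (2 * j + 1) + T (2 * j + 2) ≤ b) :
    ∑ k ∈ Finset.range (2 * m - 1), T k ≤ a + ((m : ℝ) - 1) * b := by
  induction m with
  | zero => omega
  | succ m ih =>
    rcases Nat.eq_or_lt_of_le hm with h1 | h1
    · simp [← h1, hT0]
    · have hm1 : 1 ≤ m := by omega
      have he : 2 * (m + 1) - 1 = (2 * m - 1) + 1 + 1 := by omega
      rw [he, Finset.sum_range_succ, Finset.sum_range_succ]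
      have e1 : 2 * m - 1 = 2 * (m - 1) + 1 := by omega
      have e2 : 2 * m - 1 + 1 = 2 * (m - 1) + 2 := by omega
      have hp := hpair (m - 1)
      rw [← e1, ← e2] at hp
      have := ih hm1
      push_cast
      linarith

set_option maxHeartbeats 1000000 in
/-- For every layered Gaussian relay network with an even number `L ≥ 2` of relay layers
and `N ≥ 2` relays per layer, there is a single-path subnetwork whose capacity is at
least `(2/(LN + 2))·C̄ − 4·log₂ N`. -/
theorem single_path_guarantee_even (L N : ℕ) (hLeven : Even L) (hL2 : 2 ≤ L)
    (hN : 2 ≤ N)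
    (h0 : Fin N → ℂ) (Hm : ℕ → Matrix (Fin N) (Fin N) ℂ) (hLv : Fin N → ℂ) :
    ∃ i : ℕ → Fin N,
      (2 / ((L : ℝ) * N + 2)) * approxCap L N h0 Hm hLv
        - 4 * Real.logb 2 N ≤ pathCap L N h0 Hm hLv i := by
  have hL0 : 0 < L := by omega
  have hN1 : 1 ≤ N := by omega
  have hNR : (1:ℝ) ≤ (N:ℝ) := by exact_mod_cast hN1
  have hNcard : Fintype.card (Fin N) = N := Fintype.card_fin N
  set extend : (Fin L → Fin N) → (ℕ → Fin N) :=
    fun g k => if hk : k < L then g ⟨k, hk⟩ else g ⟨0, hL0⟩ with hext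
  obtain ⟨g₀, -, hg₀⟩ := Finset.exists_max_image (Finset.univ : Finset (Fin L → Fin N))
    (fun g => pathCap L N h0 Hm hLv (extend g)) ⟨fun _ => ⟨0, by omega⟩, Finset.mem_univ _⟩
  refine ⟨extend g₀, ?_⟩
  set P := pathCap L N h0 Hm hLv (extend g₀) with hPdef
  have hP0 : 0 ≤ P := by
    rw [hPdef]
    unfold pathCap
    refine Finset.le_inf' _ _ fun t ht => ?_
    split_ifs <;> exact Real.logb_nonneg one_lt_two (le_add_of_nonneg_right (by positivity))
  have hlogN : 0 ≤ Real.logb 2 (N:ℝ) := Real.logb_nonneg one_lt_two hNR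
  have hmax : ∀ c : ℕ → Fin N, pathCap L N h0 Hm hLv c ≤ P := by
    intro c
    have he : pathCap L N h0 Hm hLv c
        = pathCap L N h0 Hm hLv (extend (fun u : Fin L => c u.1)) := by
      refine pathCap_congr L N h0 Hm hLv (by omega) fun t ht => ?_
      simp only [hext]
      rw [dif_pos ht]
    rw [he]
    have h := hg₀ (fun u : Fin L => c u.1) (Finset.mem_univ _)
    simpa using h
  set R := Rset N h0 Hm P with hR
  have hweak0 : ∀ j : Fin N, j ∉ R 0 → Real.logb 2 (1 + ‖h0 j‖ ^ 2) ≤ P := by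
    intro j hj
    by_contra hc
    push_neg at hc
    exact hj (mem_Rset_zero.2 hc)
  have hweakm : ∀ k, ∀ i : Fin N, i ∈ R k → ∀ j : Fin N, j ∉ R (k + 1) →
      Real.logb 2 (1 + ‖Hm (k + 1) j i‖ ^ 2) ≤ P := by
    intro k i hi j hj
    by_contra hc
    push_neg at hc
    exact hj (mem_Rset_succ.2 ⟨i, hi, hc⟩)
  have hweakL : ∀ i : Fin N, i ∈ R (L - 1) → Real.logb 2 (1 + ‖hLv i‖ ^ 2) ≤ P := by
    intro i hi
    by_contra hc
    push_neg at hc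
    obtain ⟨c, hcL, hc0, hct⟩ := Rset_path h0 Hm P (L - 1) i hi
    have hgt : P < pathCap L N h0 Hm hLv c := by
      unfold pathCap
      apply (Finset.lt_inf'_iff ..).2
      intro t ht
      rw [Finset.mem_range] at ht
      split_ifs with h1 h2
      · exact hc0
      · rw [hcL]; exact hc
      · exact hct t (by omega) (by omega)
    exact absurd (hmax c) (not_le.2 hgt)
  -- the threshold and per-edge gain bound
  have h2P1 : (1:ℝ) ≤ (2:ℝ) ^ P := by
    have h := Real.rpow_le_rpow_of_exponent_le (one_le_two) hP0
    simpa using h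
  set B : ℝ := (2:ℝ) ^ P - 1 with hBdef
  have hB0 : 0 ≤ B := by rw [hBdef]; linarith
  have hkey : ∀ x : ℝ, 0 ≤ x → Real.logb 2 (1 + x) ≤ P → x ≤ B := by
    intro x hx hl
    have h := (Real.logb_le_iff_le_rpow one_lt_two (by linarith)).1 hl
    rw [hBdef]; linarith
  set Q : ℝ := P + 2 * Real.logb 2 (N:ℝ) with hQdef
  have hQ0 : 0 ≤ Q := by rw [hQdef]; linarith
  have hNBQ : Real.logb 2 ((N:ℝ) ^ 2 * (1 + B)) = Q := by
    have h1B : (1:ℝ) + B = 2 ^ P := by rw [hBdef]; ring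
    rw [h1B, Real.logb_mul (by positivity) (by positivity), Real.logb_pow,
      Real.logb_rpow two_pos (by norm_num), hQdef]
    ring
  have hcard : ∀ (s : Finset (Fin N)) (inst : Fintype {x : Fin N // x ∈ s}),
      @Fintype.card _ inst = s.card := by
    intro s inst
    have h : inst = FinsetCoe.fintype s := Subsingleton.elim _ _
    subst h
    exact Fintype.card_coe s
  have hcardle : ∀ (s : Finset (Fin N)) (inst : Fintype {x : Fin N // x ∈ s}),
      @Fintype.card _ inst ≤ N := by
    intro s inst
    rw [hcard s inst]
    have h := Finset.card_le_univ s
    rwa [hNcard] at h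
  have hcomplcast : ∀ s : Finset (Fin N), ((sᶜ : Finset (Fin N)).card : ℝ) = (N:ℝ) - s.card := by
    intro s
    have h := Finset.card_le_univ s
    rw [hNcard] at h
    rw [Finset.card_compl, hNcard, Nat.cast_sub h]
  -- destination term
  have hdst : Real.logb 2 (1 + ∑ i ∈ R (L - 1), ‖hLv i‖ ^ 2) ≤ Q := by
    have hsumnn : 0 ≤ ∑ i ∈ R (L - 1), ‖hLv i‖ ^ 2 :=
      Finset.sum_nonneg fun i _ => by positivity
    have hsum : ∑ i ∈ R (L - 1), ‖hLv i‖ ^ 2 ≤ (N:ℝ) * B := by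
      calc ∑ i ∈ R (L - 1), ‖hLv i‖ ^ 2
          ≤ ∑ _i ∈ R (L - 1), B :=
            Finset.sum_le_sum fun i hi => hkey _ (by positivity) (hweakL i hi)
        _ = ((R (L - 1)).card : ℝ) * B := by rw [Finset.sum_const, nsmul_eq_mul]
        _ ≤ (N:ℝ) * B := by
            have hcl : ((R (L - 1)).card : ℝ) ≤ (N:ℝ) := by
              have h := Finset.card_le_univ (R (L - 1))
              rw [hNcard] at h
              exact_mod_cast h
            exact mul_le_mul_of_nonneg_right hcl hB0
    have h1 : (1:ℝ) + ∑ i ∈ R (L - 1), ‖hLv i‖ ^ 2 ≤ (N:ℝ) ^ 2 * (1 + B) := by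
      nlinarith
    calc Real.logb 2 (1 + ∑ i ∈ R (L - 1), ‖hLv i‖ ^ 2)
        ≤ Real.logb 2 ((N:ℝ) ^ 2 * (1 + B)) :=
          Real.logb_le_logb_of_le one_lt_two (by linarith) h1
      _ = Q := hNBQ
  -- even splitting of L
  obtain ⟨mh, hmh⟩ := hLeven
  have hm1 : 1 ≤ mh := by omega
  have hL2m : L = 2 * mh := by omega
  have hmr : (1:ℝ) ≤ (mh:ℝ) := by exact_mod_cast hm1
  -- the cut bound
  have hcut : cutValue L N h0 Hm hLv R ≤ ((mh:ℝ) * (N:ℝ) + 1) * Q := by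
    unfold cutValue
    refine le_trans (add_le_add (add_le_add
        (?_ : _ ≤ ((N:ℝ) - ((R 0).card : ℝ)) * Q)
        (?_ : _ ≤ ((R 0).card : ℝ) * Q + ((mh:ℝ) - 1) * ((N:ℝ) * Q))) hdst)
      (le_of_eq (by ring))
    · -- source term
      refine le_trans (le_of_eq (mimoCap_conjTranspose' _).symm)
        (le_trans (mimoCap_le' _ hB0 ?_ (N := N) (by simpa using hN1)
          (hcardle _ _) hN1) (le_of_eq ?_))
      · intro a b
        simp only [Matrix.conjTranspose_apply, Matrix.of_apply, Complex.star_def,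
          Complex.norm_conj]
        exact hkey _ (by positivity) (hweak0 b.1 (Finset.mem_compl.1 b.2))
      · rw [hNBQ, hcard, hcomplcast]
    · -- middle terms
      have hL1 : L - 1 = 2 * mh - 1 := by omega
      rw [hL1]
      refine pair_sum mh hm1 ?_ ?_
      · -- column bound for the first middle term
        refine le_trans (mimoCap_le' _ hB0 ?_ (N := N) (hcardle _ _)
          (hcardle _ _) hN1) (le_of_eq ?_)
        · intro a b
          simp only [Matrix.submatrix_apply]
          exact hkey _ (by positivity) (hweakm 0 b.1 b.2 a.1 (Finset.mem_compl.1 a.2))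
        · rw [hNBQ, hcard]
      · -- paired bounds
        intro j
        refine le_trans (add_le_add
            (?_ : _ ≤ ((N:ℝ) - ((R (2 * j + 1 + 1)).card : ℝ)) * Q)
            (?_ : _ ≤ ((R (2 * j + 2)).card : ℝ) * Q)) (le_of_eq ?_)
        · -- row bound
          refine le_trans (le_of_eq (mimoCap_conjTranspose' _).symm)
            (le_trans (mimoCap_le' _ hB0 ?_ (N := N) (hcardle _ _)
              (hcardle _ _) hN1) (le_of_eq ?_))
          · intro a b
            simp only [Matrix.conjTranspose_apply, Matrix.submatrix_apply,
              Complex.star_def, Complex.norm_conj]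
            exact hkey _ (by positivity)
              (hweakm (2 * j + 1) a.1 a.2 b.1 (Finset.mem_compl.1 b.2))
          · rw [hNBQ, hcard, hcomplcast]
        · -- column bound
          refine le_trans (mimoCap_le' _ hB0 ?_ (N := N) (hcardle _ _)
            (hcardle _ _) hN1) (le_of_eq ?_)
          · intro a b
            simp only [Matrix.submatrix_apply]
            exact hkey _ (by positivity)
              (hweakm (2 * j + 2) b.1 b.2 a.1 (Finset.mem_compl.1 a.2))
          · rw [hNBQ, hcard]
        · -- combine
          rw [show 2 * j + 1 + 1 = 2 * j + 2 from by omega]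
          ring
  -- conclusion
  by_cases hbdd : BddBelow {c : ℝ | ∃ y : ℕ → Finset (Fin N), c = cutValue L N h0 Hm hLv y}
  · have hCle : approxCap L N h0 Hm hLv ≤ cutValue L N h0 Hm hLv R :=
      csInf_le hbdd ⟨R, rfl⟩
    have hC : approxCap L N h0 Hm hLv ≤ ((mh:ℝ) * (N:ℝ) + 1) * Q := hCle.trans hcut
    have hDpos : (0:ℝ) < (L:ℝ) * N + 2 := by positivity
    have hD : (L:ℝ) * N + 2 = 2 * ((mh:ℝ) * N + 1) := by
      rw [hL2m]; push_cast; ring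
    have hmNpos : (0:ℝ) < (mh:ℝ) * N + 1 := by positivity
    have h2 : 2 / ((L:ℝ) * N + 2) * (((mh:ℝ) * N + 1) * Q) = Q := by
      rw [hD]
      field_simp
    have h1 : 2 / ((L:ℝ) * N + 2) * approxCap L N h0 Hm hLv ≤ Q := by
      calc 2 / ((L:ℝ) * N + 2) * approxCap L N h0 Hm hLv
          ≤ 2 / ((L:ℝ) * N + 2) * (((mh:ℝ) * N + 1) * Q) :=
            mul_le_mul_of_nonneg_left hC (by positivity)
        _ = Q := h2
    rw [hQdef] at h1
    linarith
  · have hz : approxCap L N h0 Hm hLv = 0 := Real.sInf_of_not_bddBelow hbdd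
    rw [hz, mul_zero, zero_sub]
    linarith
end

section
/- For every even L ≥ 2 and every N ≥ 2 there exists a layered Gaussian relay network with L relay layers and N relays per layer whose approximate capacity C̄ is strictly positive and in which every single-path subnetwork (one relay per layer) has capacity at most (2/(LN + 2))·C̄; that is, the fraction 2/(LN+2) in the routing guarantee for even L cannot be improved. -/
open scoped BigOperators

open scoped ComplexOrder

lemma det_one_add_psd_re {n : Type*} [Fintype n] [DecidableEq n] (M : Matrix n n ℂ)
    (hM : M.PosSemidef) :
    (Matrix.det (1 + M)).re = ∏ i, (1 + hM.1.eigenvalues i) := by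
  set U : Matrix n n ℂ := (hM.1.eigenvectorUnitary : Matrix n n ℂ) with hUdef
  have hUmem : U ∈ Matrix.unitaryGroup n ℂ := hM.1.eigenvectorUnitary.2
  have hUU : U * star U = 1 := (Matrix.mem_unitaryGroup_iff).mp hUmem
  have h1 : (1 : Matrix n n ℂ) + M
      = U * ((1 : Matrix n n ℂ) + Matrix.diagonal (RCLike.ofReal ∘ hM.1.eigenvalues)) * star U := by
    rw [Matrix.mul_add, Matrix.add_mul, Matrix.mul_one, hUU]
    congr 1
    exact hM.1.spectral_theorem.trans (Unitary.conjStarAlgAut_apply _ _)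
  have hD : Matrix.det ((1 : Matrix n n ℂ) + Matrix.diagonal (RCLike.ofReal ∘ hM.1.eigenvalues))
      = ((∏ i, (1 + hM.1.eigenvalues i) : ℝ) : ℂ) := by
    have : (1 : Matrix n n ℂ) + Matrix.diagonal (RCLike.ofReal ∘ hM.1.eigenvalues)
        = Matrix.diagonal (fun i => 1 + (RCLike.ofReal ∘ hM.1.eigenvalues) i) := by
      ext i j
      by_cases h : i = j <;> simp [h, Matrix.one_apply]
    rw [this, Matrix.det_diagonal, Complex.ofReal_prod]
    refine Finset.prod_congr rfl fun i _ => by simp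
  have hdetU : Matrix.det U * Matrix.det (star U) = 1 := by
    rw [← Matrix.det_mul, hUU, Matrix.det_one]
  rw [h1, Matrix.det_mul, Matrix.det_mul, mul_right_comm, hdetU, one_mul, hD, Complex.ofReal_re]

lemma one_add_sum_le_prod_one_add {ι : Type*} (s : Finset ι) (f : ι → ℝ)
    (hf : ∀ i ∈ s, 0 ≤ f i) :
    1 + ∑ i ∈ s, f i ≤ ∏ i ∈ s, (1 + f i) := by
  classical
  induction s using Finset.induction_on with
  | empty => simp
  | @insert a t hat ih =>
    rw [Finset.sum_insert hat, Finset.prod_insert hat]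
    have h0 : 0 ≤ f a := hf a (Finset.mem_insert_self a t)
    have ht : ∀ i ∈ t, 0 ≤ f i := fun i hi => hf i (Finset.mem_insert_of_mem hi)
    have hsum : 0 ≤ ∑ i ∈ t, f i := Finset.sum_nonneg ht
    have := ih ht
    nlinarith [Finset.sum_nonneg ht]

lemma det_one_add_frob {n m : Type*} [Fintype n] [Fintype m] [DecidableEq n]
    (G : Matrix n m ℂ) :
    1 + ∑ p, ∑ q, ‖G p q‖ ^ 2 ≤ (Matrix.det (1 + G * G.conjTranspose)).re := by
  have hM : (G * G.conjTranspose).PosSemidef := Matrix.posSemidef_self_mul_conjTranspose G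
  rw [det_one_add_psd_re _ hM]
  have htr : (Matrix.trace (G * G.conjTranspose)).re = ∑ p, ∑ q, ‖G p q‖ ^ 2 := by
    rw [Matrix.trace]
    rw [Complex.re_sum]
    refine Finset.sum_congr rfl fun p _ => ?_
    rw [Matrix.diag_apply, Matrix.mul_apply, Complex.re_sum]
    refine Finset.sum_congr rfl fun q _ => ?_
    rw [Matrix.conjTranspose_apply]
    simp [Complex.star_def, Complex.mul_conj, Complex.sq_norm, ← Complex.normSq_eq_norm_sq]
  have htr2 : Matrix.trace (G * G.conjTranspose) = ((∑ i, hM.1.eigenvalues i : ℝ) : ℂ) := by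
    set U : Matrix n n ℂ := (hM.1.eigenvectorUnitary : Matrix n n ℂ) with hUdef
    have hUmem : U ∈ Matrix.unitaryGroup n ℂ := hM.1.eigenvectorUnitary.2
    have hsU : star U * U = 1 := (Unitary.mem_iff.mp hUmem).1
    conv_lhs => rw [hM.1.spectral_theorem, Unitary.conjStarAlgAut_apply]
    rw [Matrix.trace_mul_comm, ← Matrix.mul_assoc, hsU, Matrix.one_mul, Matrix.trace_diagonal]
    push_cast
    rfl
  have hsum : ∑ p, ∑ q, ‖G p q‖ ^ 2 = ∑ i, hM.1.eigenvalues i := by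
    rw [← htr, htr2, Complex.ofReal_re]
  rw [hsum]
  exact one_add_sum_le_prod_one_add Finset.univ _ (fun i _ => hM.eigenvalues_nonneg i)

lemma one_le_det_re {n m : Type*} [Fintype n] [Fintype m] [DecidableEq n]
    (G : Matrix n m ℂ) : (1:ℝ) ≤ (Matrix.det (1 + G * G.conjTranspose)).re := by
  refine le_trans ?_ (det_one_add_frob G)
  have : (0:ℝ) ≤ ∑ p, ∑ q, ‖G p q‖ ^ 2 :=
    Finset.sum_nonneg fun p _ => Finset.sum_nonneg fun q _ => by positivity
  linarith

lemma mimoCap_nonneg {n m : Type*} [Fintype n] [Fintype m] [DecidableEq n]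
    (G : Matrix n m ℂ) : 0 ≤ mimoCap G :=
  Real.logb_nonneg one_lt_two (one_le_det_re G)

lemma le_mimoCap {n m : Type*} [Fintype n] [Fintype m] [DecidableEq n]
    (G : Matrix n m ℂ) (p : n) (q : m) :
    Real.logb 2 (1 + ‖G p q‖ ^ 2) ≤ mimoCap G := by
  unfold mimoCap
  refine Real.logb_le_logb_of_le one_lt_two (by positivity) ?_
  refine le_trans ?_ (det_one_add_frob G)
  have h1 : ‖G p q‖ ^ 2 ≤ ∑ q', ‖G p q'‖ ^ 2 :=
    Finset.single_le_sum (f := fun q' => ‖G p q'‖ ^ 2)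
      (fun i _ => by positivity) (Finset.mem_univ q)
  have h2 : ∑ q', ‖G p q'‖ ^ 2 ≤ ∑ p', ∑ q', ‖G p' q'‖ ^ 2 :=
    Finset.single_le_sum (f := fun p' => ∑ q', ‖G p' q'‖ ^ 2)
      (fun i _ => Finset.sum_nonneg fun q' _ => by positivity) (Finset.mem_univ p)
  linarith

lemma mimoCap_eq_card {n m : Type*} [Fintype n] [Fintype m] [DecidableEq n]
    (G : Matrix n m ℂ) (h : G * G.conjTranspose = 1) :
    mimoCap G = Fintype.card n := by
  unfold mimoCap
  rw [h]
  have h2 : (1 + 1 : Matrix n n ℂ) = (2:ℂ) • (1 : Matrix n n ℂ) := by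
    rw [two_smul]
  rw [h2, Matrix.det_smul, Matrix.det_one, mul_one]
  have : ((2:ℂ) ^ Fintype.card n).re = (2:ℝ) ^ Fintype.card n := by
    norm_cast
  rw [this, Real.logb_pow, Real.logb_self_eq_one (by norm_num), mul_one]


noncomputable def sv (W : ℕ) : ℂ := ((Real.sqrt (2 ^ W - 1) : ℝ) : ℂ)

noncomputable def myh0 (N W : ℕ) : Fin N → ℂ := fun j => if j.val = N - 1 then 1 else sv W

noncomputable def myhL (N W : ℕ) : Fin N → ℂ := fun j => if j.val = 0 then 1 else sv W

noncomputable def myHm (N W : ℕ) : ℕ → Matrix (Fin N) (Fin N) ℂ := fun m =>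
  Matrix.of fun r c =>
    if m % 2 = 1 then
      if r.val = 0 ∧ c.val = 0 then sv W
      else if r.val = N - 1 ∧ c.val = N - 1 then sv W
      else if r.val = c.val + 1 then 1 else 0
    else
      if c.val = 0 ∧ r.val ≠ N - 1 then sv W
      else if r.val = N - 1 ∧ c.val ≠ 0 then sv W
      else if r.val = N - 1 ∧ c.val = 0 then 1 else 0

def ycan (N : ℕ) : ℕ → Finset (Fin N) := fun k =>
  if k % 2 = 0 then Finset.univ.filter (fun j : Fin N => j.val ≠ N - 1)
  else Finset.univ.filter (fun j : Fin N => j.val = 0)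

noncomputable def srcTerm (N : ℕ) (h0 : Fin N → ℂ) (s : Finset (Fin N)) : ℝ :=
  mimoCap (Matrix.of (fun (j : {x : Fin N // x ∈ sᶜ}) (_ : Fin 1) => h0 j.1))

noncomputable def midTerm (N : ℕ) (H : Matrix (Fin N) (Fin N) ℂ) (s t : Finset (Fin N)) : ℝ :=
  mimoCap (H.submatrix
    (fun j : {x : Fin N // x ∈ tᶜ} => (j : Fin N))
    (fun i : {x : Fin N // x ∈ s} => (i : Fin N)))

lemma mimoCap_irrel {n m : Type*} (i1 i2 : Fintype n) (j1 j2 : Fintype m)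
    (d1 d2 : DecidableEq n) (G : Matrix n m ℂ) :
    @mimoCap n m i1 j1 d1 G = @mimoCap n m i2 j2 d2 G := by
  obtain rfl : i1 = i2 := Subsingleton.elim _ _
  obtain rfl : j1 = j2 := Subsingleton.elim _ _
  obtain rfl : d1 = d2 := Subsingleton.elim _ _
  rfl

lemma cutValue_eq (L N : ℕ) (h0 : Fin N → ℂ) (Hm : ℕ → Matrix (Fin N) (Fin N) ℂ)
    (hLv : Fin N → ℂ) (y : ℕ → Finset (Fin N)) :
    cutValue L N h0 Hm hLv y = srcTerm N h0 (y 0)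
      + ∑ k ∈ Finset.range (L - 1), midTerm N (Hm (k + 1)) (y k) (y (k + 1))
      + Real.logb 2 (1 + ∑ i ∈ y (L - 1), ‖hLv i‖ ^ 2) := by
  simp only [cutValue, srcTerm, midTerm]
  norm_num
  refine Finset.sum_congr rfl fun k _ => ?_
  exact mimoCap_irrel _ _ _ _ _ _ _

lemma sv_abs_sq (W : ℕ) : ‖sv W‖ ^ 2 = 2 ^ W - 1 := by
  have h1 : (0:ℝ) ≤ 2 ^ W - 1 := by
    have : (1:ℝ) ≤ 2 ^ W := one_le_pow₀ (by norm_num : (1:ℝ) ≤ 2)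
    linarith
  rw [sv, Complex.norm_real, Real.norm_eq_abs, abs_of_nonneg (Real.sqrt_nonneg _), Real.sq_sqrt h1]

lemma sv_logb (W : ℕ) : Real.logb 2 (1 + ‖sv W‖ ^ 2) = W := by
  rw [sv_abs_sq]
  have : (1:ℝ) + (2 ^ W - 1) = 2 ^ W := by ring
  rw [this, Real.logb_pow, Real.logb_self_eq_one (by norm_num), mul_one]

lemma srcTerm_canon (N W : ℕ) (hN : 2 ≤ N) :
    srcTerm N (myh0 N W) (Finset.univ.filter (fun j : Fin N => j.val ≠ N - 1)) = 1 := by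
  set s := Finset.univ.filter (fun j : Fin N => j.val ≠ N - 1) with hs
  have hmem : ∀ x : Fin N, x ∈ sᶜ ↔ x.val = N - 1 := by
    intro x; simp [hs]
  set G := Matrix.of (fun (j : {x : Fin N // x ∈ sᶜ}) (_ : Fin 1) => myh0 N W j.1) with hG
  have hGG : G * G.conjTranspose = 1 := by
    ext a b
    have ha : a.1.val = N - 1 := (hmem a.1).mp a.2
    have hb : b.1.val = N - 1 := (hmem b.1).mp b.2
    have hab : a = b := Subtype.ext (Fin.ext (ha.trans hb.symm))
    subst hab
    rw [Matrix.one_apply_eq, Matrix.mul_apply]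
    simp [hG, Matrix.conjTranspose_apply, myh0, ha]
  rw [srcTerm, ← hG, mimoCap_eq_card _ hGG]
  have hcompl : sᶜ = {(⟨N - 1, by omega⟩ : Fin N)} := by
    ext x
    rw [hmem, Finset.mem_singleton, Fin.ext_iff]
  rw [Fintype.card_coe, hcompl, Finset.card_singleton, Nat.cast_one]

lemma midTerm_odd_canon (N W m : ℕ) (hN : 2 ≤ N) (hm : m % 2 = 1) :
    midTerm N (myHm N W m) (Finset.univ.filter (fun j : Fin N => j.val ≠ N - 1))
      (Finset.univ.filter (fun j : Fin N => j.val = 0)) = (N : ℝ) - 1 := by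
  set s := Finset.univ.filter (fun j : Fin N => j.val ≠ N - 1) with hs
  set t := Finset.univ.filter (fun j : Fin N => j.val = 0) with ht
  have hrow : ∀ a : {x : Fin N // x ∈ tᶜ}, a.1.val ≠ 0 := by
    rintro ⟨x, hx⟩; simp [ht] at hx; exact hx
  have hcol : ∀ b : {x : Fin N // x ∈ s}, b.1.val ≠ N - 1 := by
    rintro ⟨x, hx⟩; simp [hs] at hx; exact hx
  set G := (myHm N W m).submatrix
    (fun j : {x : Fin N // x ∈ tᶜ} => (j : Fin N))
    (fun i : {x : Fin N // x ∈ s} => (i : Fin N)) with hG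
  have hent : ∀ a b, G a b = if a.1.val = b.1.val + 1 then 1 else 0 := by
    intro a b
    have h1 := hrow a
    have h2 := hcol b
    simp only [hG, Matrix.submatrix_apply, myHm, Matrix.of_apply, hm, if_pos]
    rw [if_neg (by omega), if_neg (by omega)]
  have hGG : G * G.conjTranspose = 1 := by
    ext a b
    rw [Matrix.mul_apply]
    by_cases hab : a = b
    · subst hab
      rw [Matrix.one_apply_eq]
      have ha0 : a.1.val ≠ 0 := hrow a
      have haN : a.1.val < N := a.1.isLt
      have hi₀ : (⟨a.1.val - 1, by omega⟩ : Fin N) ∈ s := by simp [hs]; omega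
      set i₀ : {x : Fin N // x ∈ s} := ⟨⟨a.1.val - 1, by omega⟩, hi₀⟩ with hi₀d
      rw [Finset.sum_eq_single i₀]
      · rw [Matrix.conjTranspose_apply, hent a i₀, if_pos (by simp [hi₀d]; omega)]
        simp
      · intro b _ hb
        rw [Matrix.conjTranspose_apply, hent a b, if_neg, zero_mul]
        intro hcon
        exact hb (Subtype.ext (Fin.ext (by simp [hi₀d]; omega)))
      · intro h; exact absurd (Finset.mem_univ i₀) h
    · rw [Matrix.one_apply_ne hab]
      refine Finset.sum_eq_zero fun i _ => ?_
      rw [Matrix.conjTranspose_apply, hent a i, hent b i]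
      by_cases h1 : a.1.val = i.1.val + 1 <;> by_cases h2 : b.1.val = i.1.val + 1
      · exact absurd (Subtype.ext (Fin.ext (by omega))) hab
      · simp [h1, h2]
      · simp [h1, h2]
      · simp [h1, h2]
  rw [midTerm, ← hG, mimoCap_eq_card _ hGG]
  have htcard : t.card = 1 := by
    rw [show t = {(⟨0, by omega⟩ : Fin N)} from by ext x; simp [ht, Fin.ext_iff]]
    exact Finset.card_singleton _
  rw [Fintype.card_coe, Finset.card_compl, htcard, Fintype.card_fin,
    Nat.cast_sub (by omega), Nat.cast_one]

lemma midTerm_even_canon (N W m : ℕ) (hN : 2 ≤ N) (hm : m % 2 = 0) :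
    midTerm N (myHm N W m) (Finset.univ.filter (fun j : Fin N => j.val = 0))
      (Finset.univ.filter (fun j : Fin N => j.val ≠ N - 1)) = 1 := by
  set s := Finset.univ.filter (fun j : Fin N => j.val = 0) with hs
  set t := Finset.univ.filter (fun j : Fin N => j.val ≠ N - 1) with ht
  have hrow : ∀ a : {x : Fin N // x ∈ tᶜ}, a.1.val = N - 1 := by
    rintro ⟨x, hx⟩; simp [ht] at hx; exact hx
  have hcol : ∀ b : {x : Fin N // x ∈ s}, b.1.val = 0 := by
    rintro ⟨x, hx⟩; simp [hs] at hx; exact hx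
  set G := (myHm N W m).submatrix
    (fun j : {x : Fin N // x ∈ tᶜ} => (j : Fin N))
    (fun i : {x : Fin N // x ∈ s} => (i : Fin N)) with hG
  have hent : ∀ a b, G a b = 1 := by
    intro a b
    have h1 := hrow a
    have h2 := hcol b
    have hm' : ¬ (m % 2 = 1) := by omega
    simp only [hG, Matrix.submatrix_apply, myHm, Matrix.of_apply, hm', if_neg, if_false]
    rw [if_neg (by omega), if_neg (by omega), if_pos (by omega)]
  have hGG : G * G.conjTranspose = 1 := by
    ext a b
    have hab : a = b := Subtype.ext (Fin.ext ((hrow a).trans (hrow b).symm))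
    subst hab
    rw [Matrix.one_apply_eq, Matrix.mul_apply]
    have hscard : Fintype.card {x : Fin N // x ∈ s} = 1 := by
      rw [Fintype.card_coe,
        show s = {(⟨0, by omega⟩ : Fin N)} from by ext x; simp [hs, Fin.ext_iff]]
      exact Finset.card_singleton _
    have : ∀ i : {x : Fin N // x ∈ s},
        G a i * star (G a i) = 1 := by
      intro i; rw [hent a i]; simp
    rw [Finset.sum_congr rfl (fun i _ => by rw [Matrix.conjTranspose_apply, this i])]
    rw [Finset.sum_const, Finset.card_univ, hscard, one_smul]
  rw [midTerm, ← hG, mimoCap_eq_card _ hGG]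
  have : tᶜ = {(⟨N - 1, by omega⟩ : Fin N)} := by
    ext x; simp [ht, Fin.ext_iff]
  rw [Fintype.card_coe, this, Finset.card_singleton, Nat.cast_one]

lemma dst_canon (N W : ℕ) (hN : 2 ≤ N) :
    Real.logb 2 (1 + ∑ i ∈ Finset.univ.filter (fun j : Fin N => j.val = 0),
      ‖myhL N W i‖ ^ 2) = 1 := by
  have : Finset.univ.filter (fun j : Fin N => j.val = 0) = {(⟨0, by omega⟩ : Fin N)} := by
    ext x; simp [Fin.ext_iff]
  rw [this, Finset.sum_singleton]
  have : myhL N W ⟨0, by omega⟩ = 1 := by simp [myhL]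
  rw [this]
  norm_num

lemma parity_sum (M N : ℕ) (hM : 1 ≤ M) :
    ∑ k ∈ Finset.range (2 * M - 1), (if k % 2 = 0 then (N : ℝ) - 1 else 1)
      = M * N - 1 := by
  induction M with
  | zero => omega
  | succ n ih =>
    by_cases hn : n = 0
    · subst hn
      rw [show 2 * 1 - 1 = 1 from rfl, Finset.sum_range_one]
      norm_num
    · have h1 : 1 ≤ n := by omega
      have h2 : 2 * (n + 1) - 1 = (2 * n - 1) + 1 + 1 := by omega
      rw [h2, Finset.sum_range_succ, Finset.sum_range_succ, ih h1]
      have h3 : ¬ ((2 * n - 1) % 2 = 0) := by omega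
      have h4 : (2 * n - 1 + 1) % 2 = 0 := by omega
      rw [if_neg h3, if_pos h4]
      push_cast
      ring

def strongCond (N m : ℕ) (r c : Fin N) : Prop :=
  if m % 2 = 1 then (r.val = 0 ∧ c.val = 0) ∨ (r.val = N - 1 ∧ c.val = N - 1)
  else (c.val = 0 ∧ r.val ≠ N - 1) ∨ (r.val = N - 1 ∧ c.val ≠ 0)

lemma myHm_strong (N W m : ℕ) (hN : 2 ≤ N) (r c : Fin N) (h : strongCond N m r c) :
    myHm N W m r c = sv W := by
  unfold strongCond at h
  by_cases hm : m % 2 = 1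
  · rw [if_pos hm] at h
    rcases h with ⟨h1, h2⟩ | ⟨h1, h2⟩
    · simp [myHm, hm, h1, h2]
    · have hne : N - 1 ≠ 0 := by omega
      simp [myHm, hm, h1, h2, hne]
  · rw [if_neg hm] at h
    rcases h with ⟨h1, h2⟩ | ⟨h1, h2⟩ <;> simp [myHm, hm, h1, h2]

lemma myHm_weak_odd (N W m : ℕ) (r c : Fin N) (hm : m % 2 = 1)
    (hr : r.val ≠ 0) (hc : c.val ≠ N - 1) :
    ‖myHm N W m r c‖ ≤ 1 := by
  have he : myHm N W m r c = if r.val = c.val + 1 then 1 else 0 := by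
    simp only [myHm, Matrix.of_apply, hm, if_pos]
    rw [if_neg (by omega), if_neg (by omega)]
  rw [he]; split_ifs <;> simp

lemma myHm_weak_even (N W m : ℕ) (r c : Fin N) (hm : m % 2 = 0)
    (hr : r.val = N - 1) (hc : c.val = 0) :
    ‖myHm N W m r c‖ ≤ 1 := by
  have hm' : ¬ (m % 2 = 1) := by omega
  have he : myHm N W m r c = 1 := by
    simp only [myHm, Matrix.of_apply, hm', if_neg, if_false]
    rw [if_neg (by omega), if_neg (by omega), if_pos (by omega)]
  rw [he]; simp

lemma srcTerm_ge (N : ℕ) (h0 : Fin N → ℂ) (s : Finset (Fin N)) (j : Fin N) (hj : j ∉ s) :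
    Real.logb 2 (1 + ‖h0 j‖ ^ 2) ≤ srcTerm N h0 s := by
  have hj' : j ∈ sᶜ := Finset.mem_compl.mpr hj
  have := le_mimoCap (Matrix.of (fun (x : {x : Fin N // x ∈ sᶜ}) (_ : Fin 1) => h0 x.1))
    ⟨j, hj'⟩ 0
  simpa [srcTerm] using this

lemma midTerm_ge (N : ℕ) (H : Matrix (Fin N) (Fin N) ℂ) (s t : Finset (Fin N))
    (i j : Fin N) (hi : i ∈ s) (hj : j ∉ t) :
    Real.logb 2 (1 + ‖H j i‖ ^ 2) ≤ midTerm N H s t := by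
  have hj' : j ∈ tᶜ := Finset.mem_compl.mpr hj
  have := le_mimoCap (H.submatrix
    (fun j : {x : Fin N // x ∈ tᶜ} => (j : Fin N))
    (fun i : {x : Fin N // x ∈ s} => (i : Fin N))) ⟨j, hj'⟩ ⟨i, hi⟩
  simpa [midTerm] using this

lemma cut_lower (L N W M : ℕ) (hN : 2 ≤ N) (hL : L = 2 * M) (hM : 1 ≤ M)
    (hW : W = M * N + 1) (y : ℕ → Finset (Fin N)) :
    (W : ℝ) ≤ cutValue L N (myh0 N W) (myHm N W) (myhL N W) y := by
  classical
  rw [cutValue_eq]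
  have hsrc0 : 0 ≤ srcTerm N (myh0 N W) (y 0) := mimoCap_nonneg _
  have hmid0 : ∀ k, 0 ≤ midTerm N (myHm N W (k + 1)) (y k) (y (k + 1)) :=
    fun k => mimoCap_nonneg _
  have hsum0 : 0 ≤ ∑ k ∈ Finset.range (L - 1),
      midTerm N (myHm N W (k + 1)) (y k) (y (k + 1)) :=
    Finset.sum_nonneg fun k _ => hmid0 k
  have hdstsum0 : 0 ≤ ∑ i ∈ y (L - 1), ‖myhL N W i‖ ^ 2 :=
    Finset.sum_nonneg fun i _ => by positivity
  have hdst0 : 0 ≤ Real.logb 2 (1 + ∑ i ∈ y (L - 1), ‖myhL N W i‖ ^ 2) :=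
    Real.logb_nonneg one_lt_two (by linarith)
  by_cases hA : (∀ j : Fin N, j.val ≠ N - 1 → j ∈ y 0)
      ∧ (∀ k, k < L - 1 → ∀ r c : Fin N, strongCond N (k + 1) r c → c ∈ y k → r ∈ y (k + 1))
      ∧ (∀ i : Fin N, i.val ≠ 0 → i ∉ y (L - 1))
  · obtain ⟨h1, h2, h3⟩ := hA
    -- forcing: y k = ycan N k for k < L
    have claimF : ∀ k, k < L → ∀ x : Fin N, x ∈ ycan N k → x ∈ y k := by
      intro k
      induction k with
      | zero =>
        intro _ x hx
        unfold ycan at hx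
        rw [if_pos rfl] at hx
        simp only [Finset.mem_filter, Finset.mem_univ, true_and] at hx
        exact h1 x hx
      | succ k ih =>
        intro hk1 x hx
        have hkL : k < L := by omega
        have hkL1 : k < L - 1 := by omega
        by_cases hk2 : k % 2 = 0
        · have hx0 : x.val = 0 := by
            unfold ycan at hx
            rw [if_neg (by omega)] at hx
            simpa using hx
          refine h2 k hkL1 x x ?_ (ih hkL x ?_)
          · unfold strongCond
            rw [if_pos (by omega)]
            exact Or.inl ⟨hx0, hx0⟩
          · unfold ycan
            rw [if_pos hk2]
            simp only [Finset.mem_filter, Finset.mem_univ, true_and]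
            omega
        · have hxN : x.val ≠ N - 1 := by
            unfold ycan at hx
            rw [if_pos (by omega)] at hx
            simpa using hx
          refine h2 k hkL1 x ⟨0, by omega⟩ ?_ (ih hkL ⟨0, by omega⟩ ?_)
          · unfold strongCond
            rw [if_neg (by omega)]
            exact Or.inl ⟨rfl, hxN⟩
          · unfold ycan
            rw [if_neg (by omega)]
            simp
    have claimB : ∀ d, d ≤ L - 1 → ∀ x : Fin N, x ∈ y (L - 1 - d) → x ∈ ycan N (L - 1 - d) := by
      intro d
      induction d with
      | zero =>
        intro _ x hx
        simp only [Nat.sub_zero] at *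
        unfold ycan
        rw [if_neg (by omega)]
        simp only [Finset.mem_filter, Finset.mem_univ, true_and]
        by_contra hx0
        exact h3 x hx0 hx
      | succ d ih =>
        intro hd1 x hx
        have hd : d ≤ L - 1 := by omega
        have hk1 : L - 1 - d = (L - 1 - (d + 1)) + 1 := by omega
        set k := L - 1 - (d + 1) with hkdef
        have hkL1 : k < L - 1 := by omega
        by_cases hk2 : k % 2 = 0
        · unfold ycan
          rw [if_pos hk2]
          simp only [Finset.mem_filter, Finset.mem_univ, true_and]
          intro hxlast
          have h5 : x ∈ y (k + 1) := by
            refine h2 k hkL1 x x ?_ hx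
            unfold strongCond
            rw [if_pos (by omega)]
            exact Or.inr ⟨hxlast, hxlast⟩
          have h6 := ih hd x (by rw [hk1]; exact h5)
          rw [hk1] at h6
          unfold ycan at h6
          rw [if_neg (by omega)] at h6
          simp only [Finset.mem_filter, Finset.mem_univ, true_and] at h6
          omega
        · unfold ycan
          rw [if_neg hk2]
          simp only [Finset.mem_filter, Finset.mem_univ, true_and]
          by_contra hx0
          have h5 : (⟨N - 1, by omega⟩ : Fin N) ∈ y (k + 1) := by
            refine h2 k hkL1 ⟨N - 1, by omega⟩ x ?_ hx
            unfold strongCond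
            rw [if_neg (by omega)]
            exact Or.inr ⟨rfl, hx0⟩
          have h6 := ih hd _ (by rw [hk1]; exact h5)
          rw [hk1] at h6
          unfold ycan at h6
          rw [if_pos (by omega)] at h6
          simp only [Finset.mem_filter, Finset.mem_univ, true_and] at h6
          exact h6 rfl
    have hF : ∀ k, k < L → y k = ycan N k := by
      intro k hk
      refine Finset.ext fun x => ⟨fun h => ?_, fun h => claimF k hk x h⟩
      have := claimB (L - 1 - k) (by omega)
      rw [show L - 1 - (L - 1 - k) = k by omega] at this
      exact this x h
    -- compute
    have e0 : y 0 = ycan N 0 := hF 0 (by omega)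
    have eL : y (L - 1) = ycan N (L - 1) := hF (L - 1) (by omega)
    have hsums : ∑ k ∈ Finset.range (L - 1),
        midTerm N (myHm N W (k + 1)) (y k) (y (k + 1))
        = ∑ k ∈ Finset.range (L - 1), (if k % 2 = 0 then (N : ℝ) - 1 else 1) := by
      refine Finset.sum_congr rfl fun k hk => ?_
      have hkr : k < L - 1 := Finset.mem_range.mp hk
      rw [hF k (by omega), hF (k + 1) (by omega)]
      unfold ycan
      by_cases hk2 : k % 2 = 0
      · rw [if_pos hk2, if_neg (by omega : ¬((k + 1) % 2 = 0)), if_pos hk2]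
        exact midTerm_odd_canon N W (k + 1) hN (by omega)
      · rw [if_neg hk2, if_pos (by omega : (k + 1) % 2 = 0), if_neg hk2]
        exact midTerm_even_canon N W (k + 1) hN (by omega)
    have e0' : srcTerm N (myh0 N W) (y 0) = 1 := by
      rw [e0]
      unfold ycan
      rw [if_pos rfl]
      exact srcTerm_canon N W hN
    have eL' : Real.logb 2 (1 + ∑ i ∈ y (L - 1), ‖myhL N W i‖ ^ 2) = 1 := by
      rw [eL]
      unfold ycan
      rw [if_neg (by omega)]
      exact dst_canon N W hN
    rw [e0', eL', hsums, show L - 1 = 2 * M - 1 by omega, parity_sum M N hM]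
    have : (W : ℝ) = M * N + 1 := by rw [hW]; push_cast; ring
    rw [this]
    linarith
  · -- some strong link is crossed
    rw [not_and_or, not_and_or] at hA
    rcases hA with hA | hA | hA
    · push_neg at hA
      obtain ⟨j, hj1, hj2⟩ := hA
      have hentry : myh0 N W j = sv W := by simp [myh0, hj1]
      have hle : (W : ℝ) ≤ srcTerm N (myh0 N W) (y 0) := by
        have := srcTerm_ge N (myh0 N W) (y 0) j hj2
        rw [hentry, sv_logb] at this
        exact this
      linarith
    · push_neg at hA
      obtain ⟨k, hk, r, c, hstrong, hc, hr⟩ := hA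
      have hle : (W : ℝ) ≤ midTerm N (myHm N W (k + 1)) (y k) (y (k + 1)) := by
        have := midTerm_ge N (myHm N W (k + 1)) (y k) (y (k + 1)) c r hc hr
        rw [myHm_strong N W (k + 1) hN r c hstrong, sv_logb] at this
        exact this
      have hsum : (W : ℝ) ≤ ∑ k ∈ Finset.range (L - 1),
          midTerm N (myHm N W (k + 1)) (y k) (y (k + 1)) := by
        refine le_trans hle ?_
        exact Finset.single_le_sum (fun k _ => hmid0 k) (Finset.mem_range.mpr hk)
      linarith
    · push_neg at hA
      obtain ⟨i, hi1, hi2⟩ := hA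
      have hentry : myhL N W i = sv W := by simp [myhL, hi1]
      have hle : ‖sv W‖ ^ 2 ≤ ∑ i ∈ y (L - 1), ‖myhL N W i‖ ^ 2 := by
        have := Finset.single_le_sum (f := fun i => ‖myhL N W i‖ ^ 2)
          (fun i _ => by positivity) hi2
        simp only [hentry] at this
        exact this
      have hW' : (W : ℝ) ≤ Real.logb 2 (1 + ∑ i ∈ y (L - 1), ‖myhL N W i‖ ^ 2) := by
        rw [← sv_logb W]
        refine Real.logb_le_logb_of_le one_lt_two (by positivity) (by linarith)
      linarith

lemma logb_two_le_one {x : ℝ} (h0 : 0 ≤ x) (h1 : x ≤ 1) : Real.logb 2 (1 + x) ≤ 1 := by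
  have : Real.logb 2 (1 + x) ≤ Real.logb 2 2 :=
    Real.logb_le_logb_of_le one_lt_two (by linarith) (by linarith)
  rwa [Real.logb_self_eq_one (by norm_num)] at this

lemma path_le (L N W M : ℕ) (hN : 2 ≤ N) (hL : L = 2 * M) (hM : 1 ≤ M)
    (i : ℕ → Fin N) :
    pathCap L N (myh0 N W) (myHm N W) (myhL N W) i ≤ 1 := by
  classical
  by_cases hall : ∀ k, k < L → i k ∈ ycan N k
  · have h1 : i (L - 1) ∈ ycan N (L - 1) := hall (L - 1) (by omega)
    have h2 : (i (L - 1)).val = 0 := by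
      unfold ycan at h1
      rw [if_neg (by omega)] at h1
      simpa using h1
    have h3 : myhL N W (i (L - 1)) = 1 := by simp [myhL, h2]
    refine le_trans (Finset.inf'_le _ (by simp : L ∈ Finset.range (L + 1))) ?_
    rw [if_neg (by omega), if_pos rfl, h3]
    norm_num
  · have hex : ∃ k, k < L ∧ i k ∉ ycan N k := by
      push_neg at hall
      obtain ⟨k, hk1, hk2⟩ := hall
      exact ⟨k, hk1, hk2⟩
    set k₀ := Nat.find hex with hk₀def
    obtain ⟨hk₀L, hk₀not⟩ := Nat.find_spec hex
    rw [← hk₀def] at hk₀L hk₀not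
    by_cases hk00 : k₀ = 0
    · have hlast : (i 0).val = N - 1 := by
        rw [hk00] at hk₀not
        unfold ycan at hk₀not
        rw [if_pos rfl] at hk₀not
        simp only [Finset.mem_filter, Finset.mem_univ, true_and, not_not] at hk₀not
        exact hk₀not
      refine le_trans (Finset.inf'_le _ (by simp : 0 ∈ Finset.range (L + 1))) ?_
      rw [if_pos rfl]
      have : myh0 N W (i 0) = 1 := by simp [myh0, hlast]
      rw [this]
      norm_num
    · have hk₀1 : 1 ≤ k₀ := by omega
      have hprev : i (k₀ - 1) ∈ ycan N (k₀ - 1) := by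
        by_contra hc
        exact Nat.find_min hex (show k₀ - 1 < k₀ by omega) ⟨by omega, hc⟩
      refine le_trans (Finset.inf'_le _ (by simp; omega : k₀ ∈ Finset.range (L + 1))) ?_
      rw [if_neg hk00, if_neg (by omega : ¬ k₀ = L)]
      have hweak : ‖myHm N W k₀ (i k₀) (i (k₀ - 1))‖ ≤ 1 := by
        by_cases hpar : k₀ % 2 = 1
        · have hc : (i (k₀ - 1)).val ≠ N - 1 := by
            unfold ycan at hprev
            rw [if_pos (by omega)] at hprev
            simpa using hprev
          have hr : (i k₀).val ≠ 0 := by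
            unfold ycan at hk₀not
            rw [if_neg (by omega)] at hk₀not
            simpa using hk₀not
          exact myHm_weak_odd N W k₀ _ _ hpar hr hc
        · have hc : (i (k₀ - 1)).val = 0 := by
            unfold ycan at hprev
            rw [if_neg (by omega)] at hprev
            simpa using hprev
          have hr : (i k₀).val = N - 1 := by
            unfold ycan at hk₀not
            rw [if_pos (by omega)] at hk₀not
            simp only [Finset.mem_filter, Finset.mem_univ, true_and, not_not] at hk₀not
            exact hk₀not
          exact myHm_weak_even N W k₀ _ _ (by omega) hr hc
      exact logb_two_le_one (by positivity) (by nlinarith [norm_nonneg (myHm N W k₀ (i k₀) (i (k₀ - 1)))])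

/-- For every even `L ≥ 2` and `N ≥ 2` there is a layered Gaussian relay network with
strictly positive approximate capacity `C̄` in which every single-path subnetwork has
capacity at most `(2/(LN + 2))·C̄`. -/
theorem single_path_tightness_even (L N : ℕ) (hLeven : Even L) (hL2 : 2 ≤ L)
    (hN : 2 ≤ N) :
    ∃ (h0 : Fin N → ℂ) (Hm : ℕ → Matrix (Fin N) (Fin N) ℂ) (hLv : Fin N → ℂ),
      0 < approxCap L N h0 Hm hLv ∧
      ∀ i : ℕ → Fin N,
        pathCap L N h0 Hm hLv i ≤
          (2 / ((L : ℝ) * N + 2)) * approxCap L N h0 Hm hLv := by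
  have hLmod : L % 2 = 0 := Nat.even_iff.mp hLeven
  set M := L / 2 with hMdef
  have hL : L = 2 * M := by omega
  have hM : 1 ≤ M := by omega
  set W := M * N + 1 with hWdef
  refine ⟨myh0 N W, myHm N W, myhL N W, ?_, ?_⟩
  all_goals {
    have hcut : ∀ y : ℕ → Finset (Fin N),
        (W : ℝ) ≤ cutValue L N (myh0 N W) (myHm N W) (myhL N W) y :=
      fun y => cut_lower L N W M hN hL hM rfl y
    have hlb : (W : ℝ) ≤ approxCap L N (myh0 N W) (myHm N W) (myhL N W) := by
      refine le_csInf ⟨_, ⟨fun _ => (∅ : Finset (Fin N)), rfl⟩⟩ ?_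
      rintro c ⟨y, rfl⟩
      exact hcut y
    have hWpos : (0 : ℝ) < (W : ℝ) := by
      have : 1 ≤ W := by omega
      exact_mod_cast Nat.lt_of_lt_of_le Nat.zero_lt_one this
    first
    | exact lt_of_lt_of_le hWpos hlb
    | · intro i
        have hp : pathCap L N (myh0 N W) (myHm N W) (myhL N W) i ≤ 1 :=
          path_le L N W M hN hL hM i
        have hfrac : (2 / ((L : ℝ) * N + 2)) * (W : ℝ) = 1 := by
          have hden : ((L : ℝ) * N + 2) = 2 * (W : ℝ) := by
            rw [hL, hWdef]
            push_cast
            ring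
          rw [hden]
          have : (W : ℝ) ≠ 0 := ne_of_gt hWpos
          field_simp
        calc pathCap L N (myh0 N W) (myHm N W) (myhL N W) i ≤ 1 := hp
          _ = (2 / ((L : ℝ) * N + 2)) * (W : ℝ) := hfrac.symm
          _ ≤ (2 / ((L : ℝ) * N + 2)) * approxCap L N (myh0 N W) (myHm N W) (myhL N W) := by
              refine mul_le_mul_of_nonneg_left hlb ?_
              positivity
  }
end

section
/- Let H ∈ ℂ^{N×M} and let S ⊆ {1,…,M} be a subset of the column indices with complement S^c. Write H_S and H_{S^c} for the submatrices of H consisting of the columns in S and in S^c respectively. Then log₂ det(I_N + H H†) ≤ log₂ det(I_N + H_S H_S†) + log₂ det(I_N + H_{S^c} H_{S^c}†). The analogous inequality holds when the rows (receivers) of H are partitioned instead: for T ⊆ {1,…,N} with complement T^c, log₂ det(I_N + H H†) ≤ log₂ det(I_{|T|} + H_T H_T†) + log₂ det(I_{|T^c|} + H_{T^c} H_{T^c}†), where H_T is the submatrix consisting of the rows in T. -/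
open scoped BigOperators

open scoped ComplexOrder
open Matrix
open scoped MatrixOrder

section MimoAux

variable {n : Type*} [Fintype n] [DecidableEq n]

private lemma mimo_posDef_one' : (1 : Matrix n n ℂ).PosDef :=
  Matrix.PosDef.one

private lemma mimo_one_le_det_one_add {P : Matrix n n ℂ} (hP : P.PosSemidef) :
    (1 : ℂ) ≤ (1 + P).det := by
  have hQ : (1 + P).PosDef := mimo_posDef_one'.add_posSemidef hP
  rw [hQ.isHermitian.det_eq_prod_eigenvalues]
  have h1 : ∀ i, (1 : ℝ) ≤ hQ.isHermitian.eigenvalues i := by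
    intro i
    rw [hQ.isHermitian.eigenvalues_eq]
    set v := (hQ.isHermitian.eigenvectorBasis i : EuclideanSpace ℂ n) with hvdef
    have hv : ‖v‖ = 1 := hQ.isHermitian.eigenvectorBasis.orthonormal.1 i
    set w : n → ℂ := v.ofLp with hw
    have hsplit : dotProduct (star w) ((1 + P) *ᵥ w)
        = dotProduct (star w) w + dotProduct (star w) (P *ᵥ w) := by
      rw [Matrix.add_mulVec, Matrix.one_mulVec, dotProduct_add]
    rw [hsplit, map_add]
    have h2 : dotProduct (star w) w = 1 := by
      have h := (EuclideanSpace.inner_eq_star_dotProduct (𝕜 := ℂ) v v).symm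
      rw [inner_self_eq_norm_sq_to_K, hv] at h
      simpa [dotProduct_comm] using h
    have h3 := hP.re_dotProduct_nonneg w
    rw [h2]
    simpa using h3
  calc (1:ℂ) = ∏ _i : n, (1:ℂ) := by simp
  _ ≤ ∏ i, (hQ.isHermitian.eigenvalues i : ℂ) := by
      apply Finset.prod_le_prod
      · intro i _; exact zero_le_one
      · intro i _
        calc (1:ℂ) = ((1:ℝ) : ℂ) := by norm_num
        _ ≤ _ := Complex.real_le_real.mpr (h1 i)

private lemma mimo_sqrt_commute {X : Matrix n n ℂ} (hX : X.PosDef) :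
    CFC.sqrt X⁻¹ * X = X * CFC.sqrt X⁻¹ := by
  set R := CFC.sqrt X⁻¹ with hR
  have hRR : R * R = X⁻¹ := CFC.sqrt_mul_sqrt_self X⁻¹ hX.inv.posSemidef.nonneg
  have hcomm : R * X⁻¹ = X⁻¹ * R := by rw [← hRR, mul_assoc]
  have hdet : IsUnit X.det := hX.det_pos.ne'.isUnit
  have h1 : X * X⁻¹ = 1 := Matrix.mul_nonsing_inv X hdet
  have h2 : X⁻¹ * X = 1 := Matrix.nonsing_inv_mul X hdet
  calc R * X = X * X⁻¹ * (R * X) := by rw [h1, one_mul]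
  _ = X * (X⁻¹ * R) * X := by simp only [mul_assoc]
  _ = X * (R * X⁻¹) * X := by rw [hcomm]
  _ = X * R * (X⁻¹ * X) := by simp only [mul_assoc]
  _ = X * R := by rw [h2, mul_one]

private lemma mimo_RXR_eq_one {X : Matrix n n ℂ} (hX : X.PosDef) :
    CFC.sqrt X⁻¹ * X * CFC.sqrt X⁻¹ = 1 := by
  rw [mimo_sqrt_commute hX, mul_assoc, CFC.sqrt_mul_sqrt_self X⁻¹ hX.inv.posSemidef.nonneg,
    Matrix.mul_nonsing_inv X hX.det_pos.ne'.isUnit]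

private lemma mimo_det_factor {X B : Matrix n n ℂ} (hX : X.PosDef) :
    (X + B).det = X.det * (1 + X⁻¹ * B).det := by
  have h1 : X * (1 + X⁻¹ * B) = X + B := by
    rw [Matrix.mul_add, mul_one, ← mul_assoc,
      Matrix.mul_nonsing_inv X hX.det_pos.ne'.isUnit, one_mul]
  rw [← h1, det_mul]

private lemma mimo_det_le_det_add {X D : Matrix n n ℂ} (hX : X.PosDef) (hD : D.PosSemidef) :
    X.det ≤ (X + D).det := by
  set R := CFC.sqrt X⁻¹ with hRdef
  have hRH : Rᴴ = R := (CFC.sqrt_nonneg X⁻¹).posSemidef.isHermitian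
  have hRR : R * R = X⁻¹ := CFC.sqrt_mul_sqrt_self X⁻¹ hX.inv.posSemidef.nonneg
  have h2 : (1 + X⁻¹ * D).det = (1 + R * D * R).det := by
    rw [← hRR, mul_assoc R R D, Matrix.det_one_add_mul_comm]
  have h3 : (R * D * R).PosSemidef := by
    have := hD.conjTranspose_mul_mul_same R
    rwa [hRH] at this
  have h4 : (1 : ℂ) ≤ (1 + X⁻¹ * D).det := h2 ▸ mimo_one_le_det_one_add h3
  calc X.det = X.det * 1 := (mul_one _).symm
  _ ≤ X.det * (1 + X⁻¹ * D).det := mul_le_mul_of_nonneg_left h4 hX.det_pos.le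
  _ = (X + D).det := (mimo_det_factor hX).symm

private lemma mimo_det_one_add_add_le {A B : Matrix n n ℂ}
    (hA : A.PosSemidef) (hB : B.PosSemidef) :
    (1 + A + B).det ≤ (1 + A).det * (1 + B).det := by
  set X := 1 + A with hXdef
  have hX : X.PosDef := mimo_posDef_one'.add_posSemidef hA
  set R := CFC.sqrt X⁻¹ with hRdef
  have hRH : Rᴴ = R := (CFC.sqrt_nonneg X⁻¹).posSemidef.isHermitian
  have hRR : R * R = X⁻¹ := CFC.sqrt_mul_sqrt_self X⁻¹ hX.inv.posSemidef.nonneg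
  set Y := CFC.sqrt B with hYdef
  have hYH : Yᴴ = Y := (CFC.sqrt_nonneg B).posSemidef.isHermitian
  have hYY : Y * Y = B := CFC.sqrt_mul_sqrt_self B hB.nonneg
  have h2 : (1 + X⁻¹ * B).det = (1 + Y * X⁻¹ * Y).det := by
    rw [← hRR, ← hYY]
    calc (1 + R * R * (Y * Y)).det = (1 + R * (R * (Y * Y))).det := by rw [mul_assoc]
    _ = (1 + R * (Y * Y) * R).det := by rw [Matrix.det_one_add_mul_comm, ← mul_assoc]
    _ = (1 + (R * Y) * (Y * R)).det := by noncomm_ring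
    _ = (1 + (Y * R) * (R * Y)).det := Matrix.det_one_add_mul_comm _ _
    _ = (1 + Y * (R * R) * Y).det := by noncomm_ring
  have hM1 : (Y * X⁻¹ * Y).PosSemidef := by
    have := hX.inv.posSemidef.conjTranspose_mul_mul_same Y
    rwa [hYH] at this
  have hRAR : (R * A * R).PosSemidef := by
    have := hA.conjTranspose_mul_mul_same R
    rwa [hRH] at this
  have hD : (Y * (R * A * R) * Y).PosSemidef := by
    have := hRAR.conjTranspose_mul_mul_same Y
    rwa [hYH] at this
  have hkey : X⁻¹ + R * A * R = 1 := by
    have : R * A * R = R * X * R - R * R := by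
      rw [hXdef]; noncomm_ring
    rw [this, mimo_RXR_eq_one hX, hRR]
    abel
  have hsum : 1 + B = (1 + Y * X⁻¹ * Y) + Y * (R * A * R) * Y := by
    have : Y * X⁻¹ * Y + Y * (R * A * R) * Y = Y * (X⁻¹ + R * A * R) * Y := by
      noncomm_ring
    rw [add_assoc, this, hkey, mul_one, hYY]
  have h5 : (1 + Y * X⁻¹ * Y).det ≤ (1 + B).det := by
    rw [hsum]
    exact mimo_det_le_det_add (mimo_posDef_one'.add_posSemidef hM1) hD
  calc (1 + A + B).det = (X + B).det := by rw [hXdef]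
  _ = X.det * (1 + X⁻¹ * B).det := mimo_det_factor hX
  _ = X.det * (1 + Y * X⁻¹ * Y).det := by rw [h2]
  _ ≤ X.det * (1 + B).det := mul_le_mul_of_nonneg_left h5 hX.det_pos.le
  _ = (1 + A).det * (1 + B).det := by rw [hXdef]

private lemma mimo_det_pos_re {P : Matrix n n ℂ} (hP : P.PosSemidef) :
    0 < (1 + P).det.re ∧ (1 + P).det.im = 0 := by
  have := (mimo_posDef_one'.add_posSemidef hP).det_pos
  rw [Complex.lt_def] at this
  exact ⟨by simpa using this.1, this.2.symm⟩

private lemma mimo_col_split {m : Type*} [Fintype m] [DecidableEq m]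
    (H : Matrix n m ℂ) (S : Finset m) :
    H * Hᴴ = (H.submatrix id (fun i : {x : m // x ∈ S} => (i : m)))
        * (H.submatrix id (fun i : {x : m // x ∈ S} => (i : m)))ᴴ
      + (H.submatrix id (fun i : {x : m // x ∈ Sᶜ} => (i : m)))
        * (H.submatrix id (fun i : {x : m // x ∈ Sᶜ} => (i : m)))ᴴ := by
  ext i j
  simp only [Matrix.mul_apply, Matrix.conjTranspose_apply, Matrix.submatrix_apply, id_eq,
    Matrix.add_apply]
  rw [← Finset.sum_add_sum_compl S (fun k => H i k * star (H j k))]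
  congr 1
  · exact (Finset.sum_coe_sort S fun k => H i k * star (H j k)).symm
  · exact (Finset.sum_coe_sort Sᶜ fun k => H i k * star (H j k)).symm

private lemma mimo_col_case {m : Type*} [Fintype m] [DecidableEq m]
    (H : Matrix n m ℂ) (S : Finset m) :
    mimoCap H ≤
      mimoCap (H.submatrix id (fun i : {x : m // x ∈ S} => (i : m)))
        + mimoCap (H.submatrix id (fun i : {x : m // x ∈ Sᶜ} => (i : m))) := by
  set HS := H.submatrix id (fun i : {x : m // x ∈ S} => (i : m)) with hHS
  set HC := H.submatrix id (fun i : {x : m // x ∈ Sᶜ} => (i : m)) with hHC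
  have hA : (HS * HSᴴ).PosSemidef := posSemidef_self_mul_conjTranspose HS
  have hB : (HC * HCᴴ).PosSemidef := posSemidef_self_mul_conjTranspose HC
  have hsplit : 1 + H * Hᴴ = 1 + HS * HSᴴ + HC * HCᴴ := by
    rw [mimo_col_split H S, add_assoc]
  have hdet : (1 + H * Hᴴ).det ≤ (1 + HS * HSᴴ).det * (1 + HC * HCᴴ).det := by
    rw [hsplit]; exact mimo_det_one_add_add_le hA hB
  obtain ⟨ha, ha'⟩ := mimo_det_pos_re hA
  obtain ⟨hb, hb'⟩ := mimo_det_pos_re hB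
  obtain ⟨hx, _⟩ := mimo_det_pos_re (posSemidef_self_mul_conjTranspose H)
  have hre : (1 + H * Hᴴ).det.re ≤ (1 + HS * HSᴴ).det.re * (1 + HC * HCᴴ).det.re := by
    have := (Complex.le_def.mp hdet).1
    rwa [Complex.mul_re, ha', hb', mul_zero, sub_zero] at this
  unfold mimoCap
  calc Real.logb 2 (1 + H * Hᴴ).det.re
      ≤ Real.logb 2 ((1 + HS * HSᴴ).det.re * (1 + HC * HCᴴ).det.re) :=
        Real.logb_le_logb_of_le one_lt_two hx hre
  _ = _ := Real.logb_mul ha.ne' hb.ne'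

private lemma mimo_cap_conjTranspose {m : Type*} [Fintype m] [DecidableEq m]
    (G : Matrix n m ℂ) : mimoCap Gᴴ = mimoCap G := by
  unfold mimoCap
  rw [conjTranspose_conjTranspose, Matrix.det_one_add_mul_comm]

end MimoAux

/-- MIMO capacity decomposition lemma: the capacity of a MIMO channel with independent
inputs is at most the sum of the capacities of the two subchannels obtained by
partitioning the transmitters (columns) into `S` and `Sᶜ`, and likewise for a partition
of the receivers (rows) into `T` and `Tᶜ`. -/
theorem mimo_capacity_decomposition (M N : ℕ) (H : Matrix (Fin N) (Fin M) ℂ) :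
    (∀ S : Finset (Fin M),
      mimoCap H ≤
        mimoCap (H.submatrix id (fun i : {x : Fin M // x ∈ S} => (i : Fin M)))
          + mimoCap (H.submatrix id (fun i : {x : Fin M // x ∈ Sᶜ} => (i : Fin M))))
    ∧
    (∀ T : Finset (Fin N),
      mimoCap H ≤
        mimoCap (H.submatrix (fun j : {x : Fin N // x ∈ T} => (j : Fin N)) id)
          + mimoCap (H.submatrix (fun j : {x : Fin N // x ∈ Tᶜ} => (j : Fin N)) id)) := by
  constructor
  · intro S
    exact mimo_col_case H S
  · intro T
    have h := mimo_col_case Hᴴ T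
    rw [mimo_cap_conjTranspose] at h
    have e1 : Hᴴ.submatrix id (fun i : {x : Fin N // x ∈ T} => (i : Fin N))
        = (H.submatrix (fun j : {x : Fin N // x ∈ T} => (j : Fin N)) id)ᴴ := by
      rw [Matrix.conjTranspose_submatrix]
    have e2 : Hᴴ.submatrix id (fun i : {x : Fin N // x ∈ Tᶜ} => (i : Fin N))
        = (H.submatrix (fun j : {x : Fin N // x ∈ Tᶜ} => (j : Fin N)) id)ᴴ := by
      rw [Matrix.conjTranspose_submatrix]
    rw [e1, e2, mimo_cap_conjTranspose, mimo_cap_conjTranspose] at h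
    exact h
end

section
/- Let A and B be N×N Hermitian positive semidefinite complex matrices. Then det(I + A + B) ≤ det(I + A) · det(I + B), where I is the N×N identity matrix. -/
open scoped ComplexOrder

open Matrix

open scoped MatrixOrder

/-- If `P` is PSD then `det (1 + P) ≥ 1` (in the complex order). -/
private lemma one_le_det_one_add' {N : ℕ} {P : Matrix (Fin N) (Fin N) ℂ}
    (hP : P.PosSemidef) : (1 : ℂ) ≤ (1 + P).det := by
  have h := hP.1.spectral_theorem
  have hU1 : (hP.1.eigenvectorUnitary : Matrix (Fin N) (Fin N) ℂ) *
      star (hP.1.eigenvectorUnitary : Matrix (Fin N) (Fin N) ℂ) = 1 :=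
    Unitary.coe_mul_star_self _
  have hdecomp : 1 + P = (hP.1.eigenvectorUnitary : Matrix (Fin N) (Fin N) ℂ) *
      (1 + Matrix.diagonal (RCLike.ofReal ∘ hP.1.eigenvalues)) *
      star (hP.1.eigenvectorUnitary : Matrix (Fin N) (Fin N) ℂ) := by
    calc 1 + P = (hP.1.eigenvectorUnitary : Matrix (Fin N) (Fin N) ℂ) *
        star (hP.1.eigenvectorUnitary : Matrix (Fin N) (Fin N) ℂ) +
        (hP.1.eigenvectorUnitary : Matrix (Fin N) (Fin N) ℂ) *
        Matrix.diagonal (RCLike.ofReal ∘ hP.1.eigenvalues) *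
        star (hP.1.eigenvectorUnitary : Matrix (Fin N) (Fin N) ℂ) := by rw [hU1, ← Unitary.conjStarAlgAut_apply (S := ℂ), ← h]
      _ = _ := by noncomm_ring
  have hdet : (1 + P).det =
      (1 + Matrix.diagonal (RCLike.ofReal ∘ hP.1.eigenvalues) : Matrix (Fin N) (Fin N) ℂ).det := by
    rw [hdecomp, det_mul, det_mul, mul_right_comm, ← det_mul, hU1, det_one, one_mul]
  rw [hdet]
  have hDval : (1 + Matrix.diagonal (RCLike.ofReal ∘ hP.1.eigenvalues) : Matrix (Fin N) (Fin N) ℂ).det =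
      ((∏ i, (1 + hP.1.eigenvalues i) : ℝ) : ℂ) := by
    rw [← Matrix.diagonal_one, Matrix.diagonal_add, Matrix.det_diagonal]
    push_cast
    rfl
  rw [hDval]
  have h1 : (1 : ℝ) ≤ ∏ i, (1 + hP.1.eigenvalues i) := by
    calc (1:ℝ) = ∏ _i : Fin N, 1 := by simp
      _ ≤ ∏ i, (1 + hP.1.eigenvalues i) := by
        apply Finset.prod_le_prod
        · intro i _; norm_num
        · intro i _; linarith [hP.eigenvalues_nonneg i]
  exact_mod_cast h1

/-- For `M` positive definite and `B` PSD,
`det (M + B) = det M * det (1 + √B * (M⁻¹ * √B))`. -/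
private lemma det_add_psd' {N : ℕ} {M B : Matrix (Fin N) (Fin N) ℂ}
    (hM : M.PosDef) (hB : B.PosSemidef) :
    (M + B).det = M.det * (1 + CFC.sqrt B * (M⁻¹ * CFC.sqrt B)).det := by
  set S := CFC.sqrt B with hSdef
  have hS : S * S = B := CFC.sqrt_mul_sqrt_self B hB.nonneg
  have hMM : M * M⁻¹ = 1 := Matrix.mul_nonsing_inv M hM.det_pos.ne'.isUnit
  have key : M + B = M * (1 + M⁻¹ * S * S) := by
    rw [Matrix.mul_add, mul_one, ← Matrix.mul_assoc, ← Matrix.mul_assoc, hMM, one_mul, hS]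
  rw [key, det_mul]
  congr 1
  rw [show (1 : Matrix (Fin N) (Fin N) ℂ) + M⁻¹ * S * S = 1 + (M⁻¹ * S) * S from rfl,
    Matrix.det_one_add_mul_comm]

/-- Monotonicity: `det M ≤ det (M + B)` for `M` PD and `B` PSD. -/
private lemma det_le_det_add' {N : ℕ} {M B : Matrix (Fin N) (Fin N) ℂ}
    (hM : M.PosDef) (hB : B.PosSemidef) : M.det ≤ (M + B).det := by
  rw [det_add_psd' hM hB]
  have hX : (CFC.sqrt B * (M⁻¹ * CFC.sqrt B)).PosSemidef := by
    have h := hM.inv.posSemidef.mul_mul_conjTranspose_same (CFC.sqrt B)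
    rwa [(CFC.sqrt_nonneg B).posSemidef.1, Matrix.mul_assoc] at h
  have h1 := one_le_det_one_add' hX
  calc M.det = M.det * 1 := (mul_one _).symm
    _ ≤ M.det * (1 + CFC.sqrt B * (M⁻¹ * CFC.sqrt B)).det :=
      mul_le_mul_of_nonneg_left h1 hM.det_pos.le

/-- For Hermitian positive semidefinite complex matrices `A` and `B`,
`det(I + A + B) ≤ det(I + A) · det(I + B)` (these determinants are real, so the
inequality is stated between their real parts). -/
theorem det_one_add_add_le (N : ℕ) (A B : Matrix (Fin N) (Fin N) ℂ)
    (hA : A.PosSemidef) (hB : B.PosSemidef) :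
    (Matrix.det (1 + A + B)).re ≤
      (Matrix.det (1 + A)).re * (Matrix.det (1 + B)).re := by
  set M : Matrix (Fin N) (Fin N) ℂ := 1 + A with hMdef
  have hM : M.PosDef := Matrix.PosDef.one.add_posSemidef hA
  set S := CFC.sqrt B with hSdef
  have hS : S * S = B := CFC.sqrt_mul_sqrt_self B hB.nonneg
  have hSH : Sᴴ = S := (CFC.sqrt_nonneg B).posSemidef.1
  have hMM : M * M⁻¹ = 1 := Matrix.mul_nonsing_inv M hM.det_pos.ne'.isUnit
  have hMMi : M⁻¹ * M = 1 := Matrix.nonsing_inv_mul M hM.det_pos.ne'.isUnit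
  set T := CFC.sqrt A with hTdef
  have hT : T * T = A := CFC.sqrt_mul_sqrt_self A hA.nonneg
  have hTH : Tᴴ = T := (CFC.sqrt_nonneg A).posSemidef.1
  -- 1 - M⁻¹ is PSD
  have h1 : 1 - M⁻¹ = M⁻¹ * A := by
    calc 1 - M⁻¹ = M⁻¹ * M - M⁻¹ * 1 := by rw [hMMi, mul_one]
      _ = M⁻¹ * (M - 1) := by rw [Matrix.mul_sub]
      _ = M⁻¹ * A := by rw [hMdef, add_sub_cancel_left]
  have hTMT : T * M * T = A + A * A := by
    have e : T * (1 + T * T) * T = T * T + (T * T) * (T * T) := by noncomm_ring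
    rw [hMdef, ← hT, e, hT]
  have h2 : M⁻¹ * A = (M⁻¹ * T) * M * (T * M⁻¹) := by
    have e1 : (M⁻¹ * T) * M * (T * M⁻¹) = M⁻¹ * (T * M * T) * M⁻¹ := by noncomm_ring
    have e2 : A + A * A = A * M := by rw [hMdef]; noncomm_ring
    rw [e1, hTMT, e2, ← Matrix.mul_assoc, Matrix.mul_assoc (M⁻¹ * A), hMM, mul_one]
  have hOneSub : (1 - M⁻¹).PosSemidef := by
    rw [h1, h2]
    have h := hM.posSemidef.mul_mul_conjTranspose_same (M⁻¹ * T)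
    rwa [Matrix.conjTranspose_mul, hTH, hM.isHermitian.inv] at h
  -- the PSD matrix to add
  have hN : (S * ((1 - M⁻¹) * S)).PosSemidef := by
    have h := hOneSub.conjTranspose_mul_mul_same S
    rwa [hSH, Matrix.mul_assoc] at h
  set X := S * (M⁻¹ * S) with hXdef
  have hX : X.PosSemidef := by
    have h := hM.inv.posSemidef.mul_mul_conjTranspose_same S
    rwa [hSH, Matrix.mul_assoc] at h
  have hsum : (1 + X) + S * ((1 - M⁻¹) * S) = 1 + B := by
    have e : (1 + S * (M⁻¹ * S)) + S * ((1 - M⁻¹) * S) = 1 + S * S := by noncomm_ring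
    rw [hXdef, e, hS]
  -- chain of inequalities in ℂ
  have step1 : (1 + A + B).det = M.det * (1 + X).det := by
    rw [show (1 : Matrix (Fin N) (Fin N) ℂ) + A + B = M + B from by rw [hMdef]]
    exact det_add_psd' hM hB
  have step2 : (1 + X).det ≤ (1 + B).det := by
    rw [← hsum]
    exact det_le_det_add' (Matrix.PosDef.one.add_posSemidef hX) hN
  have hfin : (1 + A + B).det ≤ (1 + A).det * (1 + B).det := by
    rw [step1, show (1 + A : Matrix (Fin N) (Fin N) ℂ) = M from rfl]
    exact mul_le_mul_of_nonneg_left step2 hM.det_pos.le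
  have him : ((1 + A : Matrix (Fin N) (Fin N) ℂ).det).im = 0 := by
    have := hM.det_pos
    rw [Complex.lt_def] at this
    simpa using this.2.symm
  have hre := (Complex.le_def.mp hfin).1
  rw [Complex.mul_re, him, zero_mul, sub_zero] at hre
  exact hre
end

section
/- Let L ≥ 1 be odd and N ≥ 1. Then for every choice of integers s₁,…,s_L with 0 ≤ s_l ≤ N for all l, the quantity T = min(1, N−s₁) + Σ_{l=1}^{L−1} min(s_l, N−s_{l+1}) + min(s_L, 1) satisfies T ≤ (L−1)N/2 + 2. -/
open scoped BigOperators

lemma pair_sum_bound (N k : ℕ) (f : ℕ → ℕ)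
    (hf : ∀ j, j < k → f (2*j+1) + f (2*j+2) ≤ N) :
    ∑ l ∈ Finset.Ico 1 (2*k+1), f l ≤ k * N := by
  induction k with
  | zero => simp
  | succ k ih =>
    have h1 : 2*(k+1)+1 = (2*k+1) + 1 + 1 := by ring
    rw [h1, Finset.sum_Ico_succ_top (by omega), Finset.sum_Ico_succ_top (by omega)]
    have := ih (fun j hj => hf j (by omega))
    have := hf k (by omega)
    have h2 : 2*k+1+1 = 2*k+2 := by ring
    rw [h2]
    calc ∑ l ∈ Finset.Ico 1 (2*k+1), f l + f (2*k+1) + f (2*k+2)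
        ≤ k*N + (f (2*k+1) + f (2*k+2)) := by omega
      _ ≤ k*N + N := by omega
      _ = (k+1)*N := by ring

/-- For odd `L ≥ 1`, `N ≥ 1`, and integers `0 ≤ s l ≤ N` (for `1 ≤ l ≤ L`),
the quantity `T = min(1, N−s₁) + Σ_{l=1}^{L−1} min(s_l, N−s_{l+1}) + min(s_L, 1)`
satisfies `T ≤ (L−1)N/2 + 2`. -/
theorem cut_terms_bound_odd (L N : ℕ) (hL : 1 ≤ L) (hLodd : Odd L) (hN : 1 ≤ N)
    (s : ℕ → ℕ) (hs : ∀ l, 1 ≤ l → l ≤ L → s l ≤ N) :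
    ((min 1 (N - s 1) + ∑ l ∈ Finset.Ico 1 L, min (s l) (N - s (l + 1))
        + min (s L) 1 : ℕ) : ℝ) ≤ ((L : ℝ) - 1) * (N : ℝ) / 2 + 2 := by
  obtain ⟨k, hk⟩ := hLodd
  subst hk
  have hsum : ∑ l ∈ Finset.Ico 1 (2*k+1), min (s l) (N - s (l + 1)) ≤ k * N := by
    apply pair_sum_bound
    intro j hj
    have h1 : min (s (2*j+1)) (N - s (2*j+1+1)) ≤ N - s (2*j+2) := by
      have : 2*j+1+1 = 2*j+2 := by ring
      rw [this]; exact min_le_right _ _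
    have h2 : min (s (2*j+2)) (N - s (2*j+2+1)) ≤ s (2*j+2) := min_le_left _ _
    have h3 : s (2*j+2) ≤ N := hs _ (by omega) (by omega)
    omega
  have hT : (min 1 (N - s 1) + ∑ l ∈ Finset.Ico 1 (2*k+1), min (s l) (N - s (l + 1))
      + min (s (2*k+1)) 1 : ℕ) ≤ k * N + 2 := by
    have h1 : min 1 (N - s 1) ≤ 1 := min_le_left _ _
    have h2 : min (s (2*k+1)) 1 ≤ 1 := min_le_right _ _
    omega
  have : (((2*k+1 : ℕ) : ℝ) - 1) * (N : ℝ) / 2 + 2 = ((k * N + 2 : ℕ) : ℝ) := by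
    push_cast; ring
  rw [this]
  exact_mod_cast hT
end

section
/- Let L ≥ 2 be even and N ≥ 1. Then for every choice of integers s₁,…,s_L with 0 ≤ s_l ≤ N for all l, the quantity T = min(1, N−s₁) + Σ_{l=1}^{L−1} min(s_l, N−s_{l+1}) + min(s_L, 1) satisfies T ≤ LN/2 + 2. -/
open scoped BigOperators

/-- For even `L ≥ 2`, `N ≥ 1`, and integers `0 ≤ s l ≤ N` (for `1 ≤ l ≤ L`),
the quantity `T = min(1, N−s₁) + Σ_{l=1}^{L−1} min(s_l, N−s_{l+1}) + min(s_L, 1)`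
satisfies `T ≤ LN/2 + 2`. -/
theorem cut_terms_bound_even (L N : ℕ) (hL : 2 ≤ L) (hLeven : Even L) (hN : 1 ≤ N)
    (s : ℕ → ℕ) (hs : ∀ l, 1 ≤ l → l ≤ L → s l ≤ N) :
    ((min 1 (N - s 1) + ∑ l ∈ Finset.Ico 1 L, min (s l) (N - s (l + 1))
        + min (s L) 1 : ℕ) : ℝ) ≤ (L : ℝ) * (N : ℝ) / 2 + 2 := by
  have hs1 : s 1 ≤ N := hs 1 le_rfl (by omega)
  have hsL : s L ≤ N := hs L (by omega) le_rfl
  -- bound each middle term by the average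
  have key : ∀ l ∈ Finset.Ico 1 L, ((min (s l) (N - s (l + 1)) : ℕ) : ℝ)
      ≤ ((N : ℝ) + (s l : ℝ) - (s (l + 1) : ℝ)) / 2 := by
    intro l hl
    simp only [Finset.mem_Ico] at hl
    have h1 : s (l + 1) ≤ N := hs (l + 1) (by omega) (by omega)
    rw [Nat.cast_min, Nat.cast_sub h1]
    have ha := min_le_left (s l : ℝ) ((N : ℝ) - (s (l + 1) : ℝ))
    have hb := min_le_right (s l : ℝ) ((N : ℝ) - (s (l + 1) : ℝ))
    linarith
  have hsum : ((∑ l ∈ Finset.Ico 1 L, min (s l) (N - s (l + 1)) : ℕ) : ℝ)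
      ≤ ∑ l ∈ Finset.Ico 1 L, (((N : ℝ) + (s l : ℝ) - (s (l + 1) : ℝ)) / 2) := by
    rw [Nat.cast_sum]
    exact Finset.sum_le_sum key
  -- rewrite the sum over Ico as a sum over range
  have hrw : ∑ l ∈ Finset.Ico 1 L, (((N : ℝ) + (s l : ℝ) - (s (l + 1) : ℝ)) / 2)
      = ∑ i ∈ Finset.range (L - 1),
          (((N : ℝ) + (s (i + 1) : ℝ) - (s (i + 1 + 1) : ℝ)) / 2) := by
    rw [Finset.sum_Ico_eq_sum_range]
    refine Finset.sum_congr rfl fun i _ => ?_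
    rw [add_comm 1 i]
  -- telescoping
  have tel : ∑ i ∈ Finset.range (L - 1), ((s (i + 1) : ℝ) - (s (i + 1 + 1) : ℝ))
      = (s (0 + 1) : ℝ) - (s ((L - 1) + 1) : ℝ) :=
    Finset.sum_range_sub' (fun i => (s (i + 1) : ℝ)) (L - 1)
  have hL1 : L - 1 + 1 = L := by omega
  rw [hL1] at tel
  have hsum2 : ∑ i ∈ Finset.range (L - 1),
      (((N : ℝ) + (s (i + 1) : ℝ) - (s (i + 1 + 1) : ℝ)) / 2)
      = (((L : ℝ) - 1) * N + (s 1 : ℝ) - (s L : ℝ)) / 2 := by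
    have : ∀ i, ((N : ℝ) + (s (i + 1) : ℝ) - (s (i + 1 + 1) : ℝ)) / 2
        = (N : ℝ) / 2 + ((s (i + 1) : ℝ) - (s (i + 1 + 1) : ℝ)) / 2 := by
      intro i; ring
    simp only [this]
    rw [Finset.sum_add_distrib, Finset.sum_const, Finset.card_range, ← Finset.sum_div, tel]
    have hcast : ((L - 1 : ℕ) : ℝ) = (L : ℝ) - 1 := by
      rw [Nat.cast_sub (by omega)]; norm_num
    rw [nsmul_eq_mul, hcast]
    norm_num
    ring
  have hmin1 : ((min 1 (N - s 1) : ℕ) : ℝ) ≤ 1 := by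
    have := min_le_left 1 (N - s 1)
    exact_mod_cast Nat.cast_le.mpr this
  have hminL : ((min (s L) 1 : ℕ) : ℝ) ≤ 1 := by
    have := min_le_right (s L) 1
    exact_mod_cast Nat.cast_le.mpr this
  have hsLr : (0 : ℝ) ≤ (s L : ℝ) := Nat.cast_nonneg _
  have hs1r : (s 1 : ℝ) ≤ (N : ℝ) := Nat.cast_le.mpr hs1
  push_cast
  push_cast at hsum hmin1 hminL
  rw [hrw, hsum2] at hsum
  linarith
end

section
/- Let H ∈ ℂ^{3×3}. Then log₂ det(I₃ + H H†) ≤ (3/2) · max over all pairs of 2-element subsets T (rows) and S (columns) of {1,2,3} of log₂ det(I₂ + H[T,S] H[T,S]†) + 3·log₂(3), where H[T,S] is the 2×2 submatrix of H with rows in T and columns in S. -/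
open scoped BigOperators

open Matrix Complex ComplexConjugate

private lemma sub_reindex' {n m n' m' : Type*} [Fintype n][Fintype m][DecidableEq n][Fintype n'][Fintype m'][DecidableEq n']
    (G : Matrix n m ℂ) (e : n' ≃ n) (g : m' ≃ m) :
    (1 + (G.submatrix e g) * (G.submatrix e g)ᴴ).det = (1 + G * Gᴴ).det := by
  have h : (G.submatrix e g) * (G.submatrix e g)ᴴ = (G * Gᴴ).submatrix e e := by
    ext i j
    simp only [Matrix.mul_apply, Matrix.conjTranspose_apply, Matrix.submatrix_apply]
    exact Fintype.sum_equiv g _ _ (fun k => rfl)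
  rw [h, show (1 : Matrix n' n' ℂ) + (G*Gᴴ).submatrix e e = (1 + G*Gᴴ).submatrix e e by
    ext i j; simp [Matrix.one_apply, e.injective.eq_iff], Matrix.det_submatrix_equiv_self]

private lemma ct2' (a b c d : ℂ) : !![a,b;c,d]ᴴ = !![conj a, conj c; conj b, conj d] := by
  ext i j; fin_cases i <;> fin_cases j <;> simp

private lemma det2' (a b c d : ℂ) :
    (1 + !![a,b;c,d] * !![a,b;c,d]ᴴ).det =
      ((1 + normSq a + normSq b + normSq c + normSq d + normSq (a*d - b*c) : ℝ) : ℂ) := by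
  have h : (1 + !![a,b;c,d] * !![a,b;c,d]ᴴ).det =
      1 + a * conj a + b * conj b + c * conj c + d * conj d
        + (a*d - b*c) * conj (a*d - b*c) := by
    rw [ct2', Matrix.mul_fin_two, Matrix.one_fin_two]
    simp [Matrix.det_fin_two, Matrix.add_apply, map_sub, _root_.map_mul]
    ring
  rw [h]
  simp only [Complex.mul_conj]
  push_cast
  ring

private def peq (a b : Fin 3) (hab : a ≠ b) : Fin 2 ≃ {x : Fin 3 // x ∈ ({a, b} : Finset (Fin 3))} where
  toFun i := if i = 0 then ⟨a, by simp⟩ else ⟨b, by simp⟩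
  invFun x := if (x : Fin 3) = a then 0 else 1
  left_inv i := by fin_cases i <;> simp [hab, Ne.symm hab]
  right_inv x := by
    obtain ⟨x, hx⟩ := x
    simp only [Finset.mem_insert, Finset.mem_singleton] at hx
    rcases hx with rfl | rfl <;> simp [hab, Ne.symm hab]

/-- The `2×2` subchannel determinant value of a pair of index sets. -/
noncomputable def Fv (H : Matrix (Fin 3) (Fin 3) ℂ) (p : Finset (Fin 3) × Finset (Fin 3)) : ℝ :=
  (Matrix.det (1 + (H.submatrix
      (fun j : {x : Fin 3 // x ∈ p.1} => (j : Fin 3))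
      (fun i : {x : Fin 3 // x ∈ p.2} => (i : Fin 3))) *
    (H.submatrix
      (fun j : {x : Fin 3 // x ∈ p.1} => (j : Fin 3))
      (fun i : {x : Fin 3 // x ∈ p.2} => (i : Fin 3))).conjTranspose)).re

private lemma cap_pair (H : Matrix (Fin 3) (Fin 3) ℂ) (a b c d : Fin 3) (hab : a ≠ b) (hcd : c ≠ d) :
    Fv H ({a,b}, {c,d}) =
      1 + normSq (H a c) + normSq (H a d) + normSq (H b c) + normSq (H b d)
        + normSq (H a c * H b d - H a d * H b c) := by
  unfold Fv
  have hsub : ((H.submatrix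
      (fun j : {x : Fin 3 // x ∈ (({a,b},({c,d}:Finset (Fin 3))) : Finset (Fin 3) × Finset (Fin 3)).1} => (j : Fin 3))
      (fun i : {x : Fin 3 // x ∈ (({a,b},({c,d}:Finset (Fin 3))) : Finset (Fin 3) × Finset (Fin 3)).2} => (i : Fin 3)))).submatrix
      (peq a b hab) (peq c d hcd) = !![H a c, H a d; H b c, H b d] := by
    ext i j; fin_cases i <;> fin_cases j <;> simp [peq]
  rw [← sub_reindex' _ (peq a b hab) (peq c d hcd), hsub, det2']
  exact Complex.ofReal_re _

set_option maxHeartbeats 2000000 in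
private lemma det3' (H : Matrix (Fin 3) (Fin 3) ℂ) :
    (1 + H * Hᴴ).det =
      (((1 : ℝ)
      + (normSq (H 0 0) + normSq (H 0 1) + normSq (H 0 2)
         + normSq (H 1 0) + normSq (H 1 1) + normSq (H 1 2)
         + normSq (H 2 0) + normSq (H 2 1) + normSq (H 2 2))
      + (normSq (H 0 0 * H 1 1 - H 0 1 * H 1 0)
       + normSq (H 0 0 * H 1 2 - H 0 2 * H 1 0)
       + normSq (H 0 1 * H 1 2 - H 0 2 * H 1 1)
       + normSq (H 0 0 * H 2 1 - H 0 1 * H 2 0)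
       + normSq (H 0 0 * H 2 2 - H 0 2 * H 2 0)
       + normSq (H 0 1 * H 2 2 - H 0 2 * H 2 1)
       + normSq (H 1 0 * H 2 1 - H 1 1 * H 2 0)
       + normSq (H 1 0 * H 2 2 - H 1 2 * H 2 0)
       + normSq (H 1 1 * H 2 2 - H 1 2 * H 2 1))
      + normSq (H 0 0 * H 1 1 * H 2 2 - H 0 0 * H 1 2 * H 2 1 - H 0 1 * H 1 0 * H 2 2
          + H 0 1 * H 1 2 * H 2 0 + H 0 2 * H 1 0 * H 2 1 - H 0 2 * H 1 1 * H 2 0) : ℝ) : ℂ) := by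
  have key : ∀ i j : Fin 3, (1 + H * Hᴴ) i j =
      (if i = j then 1 else 0) + (H i 0 * conj (H j 0) + H i 1 * conj (H j 1) + H i 2 * conj (H j 2)) := by
    intro i j
    simp [Matrix.add_apply, Matrix.one_apply, Matrix.mul_apply, Matrix.conjTranspose_apply,
      Fin.sum_univ_succ]
    ring
  have h : (1 + H * Hᴴ).det =
      1 + (H 0 0 * conj (H 0 0) + H 0 1 * conj (H 0 1) + H 0 2 * conj (H 0 2)
         + H 1 0 * conj (H 1 0) + H 1 1 * conj (H 1 1) + H 1 2 * conj (H 1 2)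
         + H 2 0 * conj (H 2 0) + H 2 1 * conj (H 2 1) + H 2 2 * conj (H 2 2))
      + ((H 0 0 * H 1 1 - H 0 1 * H 1 0) * conj (H 0 0 * H 1 1 - H 0 1 * H 1 0)
       + (H 0 0 * H 1 2 - H 0 2 * H 1 0) * conj (H 0 0 * H 1 2 - H 0 2 * H 1 0)
       + (H 0 1 * H 1 2 - H 0 2 * H 1 1) * conj (H 0 1 * H 1 2 - H 0 2 * H 1 1)
       + (H 0 0 * H 2 1 - H 0 1 * H 2 0) * conj (H 0 0 * H 2 1 - H 0 1 * H 2 0)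
       + (H 0 0 * H 2 2 - H 0 2 * H 2 0) * conj (H 0 0 * H 2 2 - H 0 2 * H 2 0)
       + (H 0 1 * H 2 2 - H 0 2 * H 2 1) * conj (H 0 1 * H 2 2 - H 0 2 * H 2 1)
       + (H 1 0 * H 2 1 - H 1 1 * H 2 0) * conj (H 1 0 * H 2 1 - H 1 1 * H 2 0)
       + (H 1 0 * H 2 2 - H 1 2 * H 2 0) * conj (H 1 0 * H 2 2 - H 1 2 * H 2 0)
       + (H 1 1 * H 2 2 - H 1 2 * H 2 1) * conj (H 1 1 * H 2 2 - H 1 2 * H 2 1))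
      + (H 0 0 * H 1 1 * H 2 2 - H 0 0 * H 1 2 * H 2 1 - H 0 1 * H 1 0 * H 2 2
          + H 0 1 * H 1 2 * H 2 0 + H 0 2 * H 1 0 * H 2 1 - H 0 2 * H 1 1 * H 2 0)
        * conj (H 0 0 * H 1 1 * H 2 2 - H 0 0 * H 1 2 * H 2 1 - H 0 1 * H 1 0 * H 2 2
          + H 0 1 * H 1 2 * H 2 0 + H 0 2 * H 1 0 * H 2 1 - H 0 2 * H 1 1 * H 2 0) := by
    rw [Matrix.det_fin_three]
    simp only [key]
    simp only [reduceIte, one_ne_zero, Fin.reduceEq, ite_true, ite_false]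
    simp only [map_add, map_sub, _root_.map_mul]
    ring
  rw [h]
  simp only [Complex.mul_conj]
  push_cast
  ring

private lemma cof_bound (a b c d e f g h i : ℂ) (x : ℝ)
    (h1 : ‖(e*i - f*h)‖ ≤ x) (h2 : ‖(d*i - f*g)‖ ≤ x)
    (h3 : ‖(d*h - e*g)‖ ≤ x) (h4 : ‖(b*i - c*h)‖ ≤ x)
    (h5 : ‖(a*i - c*g)‖ ≤ x) (h6 : ‖(a*h - b*g)‖ ≤ x)
    (h7 : ‖(b*f - c*e)‖ ≤ x) (h8 : ‖(a*f - c*d)‖ ≤ x)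
    (h9 : ‖(a*e - b*d)‖ ≤ x) :
    normSq (a*e*i - a*f*h - b*d*i + b*f*g + c*d*h - c*e*g) ≤ 6 * x^3 := by
  have hx : 0 ≤ x := le_trans (norm_nonneg _) h1
  set D := a*e*i - a*f*h - b*d*i + b*f*g + c*d*h - c*e*g with hD
  have hsq : D^2 = (e*i-f*h)*(a*i-c*g)*(a*e-b*d) - (e*i-f*h)*(a*h-b*g)*(a*f-c*d)
      - (d*i-f*g)*(b*i-c*h)*(a*e-b*d) + (d*i-f*g)*(a*h-b*g)*(b*f-c*e)
      + (d*h-e*g)*(b*i-c*h)*(a*f-c*d) - (d*h-e*g)*(a*i-c*g)*(b*f-c*e) := by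
    rw [hD]; ring
  have tri : ∀ z w : ℂ, ‖(z - w)‖ ≤ ‖z‖ + ‖w‖ := fun z w => by
    simpa [sub_eq_add_neg] using norm_add_le z (-w)
  have prod : ∀ u v w : ℂ, ‖u‖ ≤ x → ‖v‖ ≤ x → ‖w‖ ≤ x →
      ‖(u * v * w)‖ ≤ x^3 := by
    intro u v w hu hv hw
    rw [norm_mul, norm_mul]
    calc ‖u‖ * ‖v‖ * ‖w‖ ≤ x * x * x := by
          apply mul_le_mul (mul_le_mul hu hv (norm_nonneg _) hx) hw (norm_nonneg _)
          positivity
      _ = x^3 := by ring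
  have hns : normSq D = ‖(D^2)‖ := by
    rw [norm_pow, ← Complex.sq_norm]
  rw [hns, hsq]
  have b1 := prod _ _ _ h1 h5 h9
  have b2 := prod _ _ _ h1 h6 h8
  have b3 := prod _ _ _ h2 h4 h9
  have b4 := prod _ _ _ h2 h6 h7
  have b5 := prod _ _ _ h3 h4 h8
  have b6 := prod _ _ _ h3 h5 h7
  calc ‖((e*i-f*h)*(a*i-c*g)*(a*e-b*d) - (e*i-f*h)*(a*h-b*g)*(a*f-c*d)
      - (d*i-f*g)*(b*i-c*h)*(a*e-b*d) + (d*i-f*g)*(a*h-b*g)*(b*f-c*e)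
      + (d*h-e*g)*(b*i-c*h)*(a*f-c*d) - (d*h-e*g)*(a*i-c*g)*(b*f-c*e))‖
      ≤ ‖((e*i-f*h)*(a*i-c*g)*(a*e-b*d) - (e*i-f*h)*(a*h-b*g)*(a*f-c*d)
      - (d*i-f*g)*(b*i-c*h)*(a*e-b*d) + (d*i-f*g)*(a*h-b*g)*(b*f-c*e)
      + (d*h-e*g)*(b*i-c*h)*(a*f-c*d))‖ + ‖((d*h-e*g)*(a*i-c*g)*(b*f-c*e))‖ := tri _ _
    _ ≤ (‖((e*i-f*h)*(a*i-c*g)*(a*e-b*d) - (e*i-f*h)*(a*h-b*g)*(a*f-c*d)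
      - (d*i-f*g)*(b*i-c*h)*(a*e-b*d) + (d*i-f*g)*(a*h-b*g)*(b*f-c*e))‖
      + ‖((d*h-e*g)*(b*i-c*h)*(a*f-c*d))‖) + _ := by
        gcongr; exact norm_add_le _ _
    _ ≤ ((‖((e*i-f*h)*(a*i-c*g)*(a*e-b*d) - (e*i-f*h)*(a*h-b*g)*(a*f-c*d)
      - (d*i-f*g)*(b*i-c*h)*(a*e-b*d))‖ + ‖((d*i-f*g)*(a*h-b*g)*(b*f-c*e))‖) + _) + _ := by
        gcongr; exact norm_add_le _ _
    _ ≤ (((‖((e*i-f*h)*(a*i-c*g)*(a*e-b*d) - (e*i-f*h)*(a*h-b*g)*(a*f-c*d))‖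
      + ‖((d*i-f*g)*(b*i-c*h)*(a*e-b*d))‖) + _) + _) + _ := by
        gcongr; exact tri _ _
    _ ≤ ((((‖((e*i-f*h)*(a*i-c*g)*(a*e-b*d))‖
      + ‖((e*i-f*h)*(a*h-b*g)*(a*f-c*d))‖) + _) + _) + _) + _ := by
        gcongr; exact tri _ _
    _ ≤ 6 * x^3 := by linarith

set_option maxHeartbeats 2000000 in
/-- Antenna-selection bound for a `3×3` MIMO channel and its best `2×2` subchannel:
`log₂ det(I₃ + H Hᴴ) ≤ (3/2)·max_{T,S} log₂ det(I₂ + H[T,S] H[T,S]ᴴ) + 3·log₂ 3`,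
the maximum ranging over all pairs of 2-element subsets `T` (rows) and `S` (columns). -/
theorem mimo_3x3_best_2x2 (H : Matrix (Fin 3) (Fin 3) ℂ) :
    mimoCap H ≤
      (3 / 2) *
          (Finset.univ.filter
              (fun p : Finset (Fin 3) × Finset (Fin 3) => p.1.card = 2 ∧ p.2.card = 2)).sup'
            ⟨({0, 1}, {0, 1}), by decide⟩
            (fun p => mimoCap (H.submatrix
              (fun j : {x : Fin 3 // x ∈ p.1} => (j : Fin 3))
              (fun i : {x : Fin 3 // x ∈ p.2} => (i : Fin 3))))
        + 3 * Real.logb 2 3 := by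
    classical
  set Q := Finset.univ.filter
      (fun p : Finset (Fin 3) × Finset (Fin 3) => p.1.card = 2 ∧ p.2.card = 2) with hQ
  have hQne : Q.Nonempty := ⟨({0, 1}, {0, 1}), by decide⟩
  set M := Q.sup' hQne (Fv H) with hM
  set S := Q.sup' ⟨({0, 1}, {0, 1}), by decide⟩
      (fun p => mimoCap (H.submatrix
        (fun j : {x : Fin 3 // x ∈ p.1} => (j : Fin 3))
        (fun i : {x : Fin 3 // x ∈ p.2} => (i : Fin 3)))) with hS
  -- the nine 2×2 bounds
  have hb : ∀ a b c d : Fin 3, a ≠ b → c ≠ d →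
      1 + normSq (H a c) + normSq (H a d) + normSq (H b c) + normSq (H b d)
        + normSq (H a c * H b d - H a d * H b c) ≤ M := by
    intro a b c d hab hcd
    rw [← cap_pair H a b c d hab hcd]
    apply Finset.le_sup'
    have hca : ({a, b} : Finset (Fin 3)).card = 2 := by
      rw [Finset.card_insert_of_notMem (by simpa using hab)]; rfl
    have hcc : ({c, d} : Finset (Fin 3)).card = 2 := by
      rw [Finset.card_insert_of_notMem (by simpa using hcd)]; rfl
    simp [hQ, hca, hcc]
  have h1 := hb 0 1 0 1 (by decide) (by decide)
  have h2 := hb 0 1 0 2 (by decide) (by decide)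
  have h3 := hb 0 1 1 2 (by decide) (by decide)
  have h4 := hb 0 2 0 1 (by decide) (by decide)
  have h5 := hb 0 2 0 2 (by decide) (by decide)
  have h6 := hb 0 2 1 2 (by decide) (by decide)
  have h7 := hb 1 2 0 1 (by decide) (by decide)
  have h8 := hb 1 2 0 2 (by decide) (by decide)
  have h9 := hb 1 2 1 2 (by decide) (by decide)
  have nn : ∀ z : ℂ, 0 ≤ normSq z := normSq_nonneg
  have hM1 : 1 ≤ M := by
    nlinarith [nn (H 0 0), nn (H 0 1), nn (H 1 0), nn (H 1 1),
      nn (H 0 0 * H 1 1 - H 0 1 * H 1 0)]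
  have hM0 : (0:ℝ) < M := lt_of_lt_of_le one_pos hM1
  set s := Real.sqrt M with hs
  have hs2 : s ^ 2 = M := Real.sq_sqrt hM0.le
  have hs1 : 1 ≤ s := by nlinarith [Real.sqrt_nonneg M]
  have hs0 : (0:ℝ) < s := lt_of_lt_of_le one_pos hs1
  -- abs bounds on minors
  have habs : ∀ z : ℂ, normSq z ≤ M → ‖z‖ ≤ s := by
    intro z hz
    rw [Complex.norm_def]
    exact Real.sqrt_le_sqrt hz
  have hD : normSq (H 0 0 * H 1 1 * H 2 2 - H 0 0 * H 1 2 * H 2 1 - H 0 1 * H 1 0 * H 2 2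
      + H 0 1 * H 1 2 * H 2 0 + H 0 2 * H 1 0 * H 2 1 - H 0 2 * H 1 1 * H 2 0) ≤ 6 * s^3 := by
    apply cof_bound
    · exact habs _ (by linarith [h9, nn (H 1 1), nn (H 1 2), nn (H 2 1), nn (H 2 2)])
    · exact habs _ (by linarith [h8, nn (H 1 0), nn (H 1 2), nn (H 2 0), nn (H 2 2)])
    · exact habs _ (by linarith [h7, nn (H 1 0), nn (H 1 1), nn (H 2 0), nn (H 2 1)])
    · exact habs _ (by linarith [h6, nn (H 0 1), nn (H 0 2), nn (H 2 1), nn (H 2 2)])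
    · exact habs _ (by linarith [h5, nn (H 0 0), nn (H 0 2), nn (H 2 0), nn (H 2 2)])
    · exact habs _ (by linarith [h4, nn (H 0 0), nn (H 0 1), nn (H 2 0), nn (H 2 1)])
    · exact habs _ (by linarith [h3, nn (H 0 1), nn (H 0 2), nn (H 1 1), nn (H 1 2)])
    · exact habs _ (by linarith [h2, nn (H 0 0), nn (H 0 2), nn (H 1 0), nn (H 1 2)])
    · exact habs _ (by linarith [h1, nn (H 0 0), nn (H 0 1), nn (H 1 0), nn (H 1 1)])
  have hdetre : (Matrix.det (1 + H * H.conjTranspose)).re =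
      (1 : ℝ)
      + (normSq (H 0 0) + normSq (H 0 1) + normSq (H 0 2)
         + normSq (H 1 0) + normSq (H 1 1) + normSq (H 1 2)
         + normSq (H 2 0) + normSq (H 2 1) + normSq (H 2 2))
      + (normSq (H 0 0 * H 1 1 - H 0 1 * H 1 0)
       + normSq (H 0 0 * H 1 2 - H 0 2 * H 1 0)
       + normSq (H 0 1 * H 1 2 - H 0 2 * H 1 1)
       + normSq (H 0 0 * H 2 1 - H 0 1 * H 2 0)
       + normSq (H 0 0 * H 2 2 - H 0 2 * H 2 0)
       + normSq (H 0 1 * H 2 2 - H 0 2 * H 2 1)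
       + normSq (H 1 0 * H 2 1 - H 1 1 * H 2 0)
       + normSq (H 1 0 * H 2 2 - H 1 2 * H 2 0)
       + normSq (H 1 1 * H 2 2 - H 1 2 * H 2 1))
      + normSq (H 0 0 * H 1 1 * H 2 2 - H 0 0 * H 1 2 * H 2 1 - H 0 1 * H 1 0 * H 2 2
          + H 0 1 * H 1 2 * H 2 0 + H 0 2 * H 1 0 * H 2 1 - H 0 2 * H 1 1 * H 2 0) := by
    rw [det3']
    exact Complex.ofReal_re _
  have hMs : M ≤ M * s := le_mul_of_one_le_right hM0.le hs1
  have hs3 : s ^ 3 = M * s := by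
    rw [pow_succ, hs2]
  have hle : (Matrix.det (1 + H * H.conjTranspose)).re ≤ 27 * (M * s) := by
    rw [hdetre]
    nlinarith [nn (H 0 0), nn (H 0 1), nn (H 0 2), nn (H 1 0), nn (H 1 1), nn (H 1 2),
      nn (H 2 0), nn (H 2 1), nn (H 2 2), hD, hs3, hMs, mul_pos hM0 hs0]
  have hpos : (0:ℝ) < (Matrix.det (1 + H * H.conjTranspose)).re := by
    rw [hdetre]
    nlinarith [nn (H 0 0), nn (H 0 1), nn (H 0 2), nn (H 1 0), nn (H 1 1), nn (H 1 2),
      nn (H 2 0), nn (H 2 1), nn (H 2 2),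
      nn (H 0 0 * H 1 1 - H 0 1 * H 1 0), nn (H 0 0 * H 1 2 - H 0 2 * H 1 0),
      nn (H 0 1 * H 1 2 - H 0 2 * H 1 1), nn (H 0 0 * H 2 1 - H 0 1 * H 2 0),
      nn (H 0 0 * H 2 2 - H 0 2 * H 2 0), nn (H 0 1 * H 2 2 - H 0 2 * H 2 1),
      nn (H 1 0 * H 2 1 - H 1 1 * H 2 0), nn (H 1 0 * H 2 2 - H 1 2 * H 2 0),
      nn (H 1 1 * H 2 2 - H 1 2 * H 2 1),
      nn (H 0 0 * H 1 1 * H 2 2 - H 0 0 * H 1 2 * H 2 1 - H 0 1 * H 1 0 * H 2 2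
          + H 0 1 * H 1 2 * H 2 0 + H 0 2 * H 1 0 * H 2 1 - H 0 2 * H 1 1 * H 2 0)]
  have l1 : mimoCap H ≤ Real.logb 2 (27 * (M * s)) :=
    Real.logb_le_logb_of_le one_lt_two hpos hle
  have l2 : Real.logb 2 (27 * (M * s)) = 3 * Real.logb 2 3 + (3/2) * Real.logb 2 M := by
    rw [Real.logb_mul (by norm_num) (by positivity),
      Real.logb_mul (ne_of_gt hM0) (ne_of_gt hs0),
      show (27:ℝ) = 3^3 by norm_num, Real.logb_pow,
      show Real.logb 2 s = Real.logb 2 M / 2 by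
        rw [hs]; unfold Real.logb; rw [Real.log_sqrt hM0.le]; ring]
    push_cast
    ring
  have l3 : Real.logb 2 M ≤ S := by
    obtain ⟨p0, hp0, hEq⟩ := Finset.exists_mem_eq_sup' hQne (Fv H)
    have heq2 : Real.logb 2 M = mimoCap (H.submatrix
        (fun j : {x : Fin 3 // x ∈ p0.1} => (j : Fin 3))
        (fun i : {x : Fin 3 // x ∈ p0.2} => (i : Fin 3))) := by
      rw [hM, hEq]; rfl
    rw [heq2, hS]
    exact Finset.le_sup' (fun p : Finset (Fin 3) × Finset (Fin 3) => mimoCap (H.submatrix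
      (fun j : {x : Fin 3 // x ∈ p.1} => (j : Fin 3))
      (fun i : {x : Fin 3 // x ∈ p.2} => (i : Fin 3)))) hp0
  have hfinal : (3/2 : ℝ) * Real.logb 2 M ≤ (3/2) * S := by linarith
  linarith [l1, l2.le, hfinal]
end

section
/- Let H ∈ ℂ^{3×2}. Then log₂ det(I₃ + H H†) ≤ max over 2-element subsets T of {1,2,3} of log₂ det(I₂ + H_T H_T†) + log₂(3), where H_T denotes the 2×2 submatrix of H consisting of the rows in T. -/
open scoped BigOperators

lemma mimoCap_reindex {n n' m : Type*} [Fintype n] [Fintype m] [Fintype n']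
    [DecidableEq n] [DecidableEq n'] (G : Matrix n m ℂ) (e : n' ≃ n) :
    mimoCap (G.submatrix e id) = mimoCap G := by
  unfold mimoCap
  congr 1
  have h1 : (G.submatrix e id).conjTranspose = (G.conjTranspose).submatrix id e := rfl
  rw [h1]
  have h2 : (G.submatrix ⇑e id) * (G.conjTranspose.submatrix id ⇑e)
      = (G * G.conjTranspose).submatrix e e := by
    have := Matrix.submatrix_mul_equiv G G.conjTranspose e (Equiv.refl m) e
    simpa using this
  rw [h2]
  have h3 : (1 : Matrix n' n' ℂ) = (1 : Matrix n n ℂ).submatrix e e :=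
    (Matrix.submatrix_one_equiv e).symm
  rw [h3, show Matrix.submatrix 1 ⇑e ⇑e + (G * G.conjTranspose).submatrix ⇑e ⇑e
      = (1 + G * G.conjTranspose).submatrix ⇑e ⇑e from rfl, Matrix.det_submatrix_equiv_self]

lemma coreC (H : Matrix (Fin 3) (Fin 2) ℂ) :
    (Matrix.det (1 + (H.submatrix ![0,1] id).conjTranspose * (H.submatrix ![0,1] id)))
    + (Matrix.det (1 + (H.submatrix ![0,2] id).conjTranspose * (H.submatrix ![0,2] id)))
    + (Matrix.det (1 + (H.submatrix ![1,2] id).conjTranspose * (H.submatrix ![1,2] id)))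
    = (Matrix.det (1 + H.conjTranspose * H)) + 2
      + ∑ i : Fin 3, ∑ j : Fin 2, star (H i j) * H i j := by
  simp only [Matrix.det_fin_two, Matrix.add_apply, Matrix.one_apply, Matrix.mul_apply,
    Matrix.conjTranspose_apply, Matrix.submatrix_apply, Fin.sum_univ_three, Fin.sum_univ_two,
    id_eq, Matrix.cons_val_zero, Matrix.cons_val_one, Matrix.head_cons, Fin.isValue, reduceIte,
    show ((0:Fin 2) ≠ 1) by decide, show ((1:Fin 2) ≠ 0) by decide]
  ring

lemma det2C (M : Matrix (Fin 2) (Fin 2) ℂ) :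
    Matrix.det (1 + M.conjTranspose * M)
    = 1 + (∑ i : Fin 2, ∑ j : Fin 2, star (M i j) * M i j)
      + star (Matrix.det M) * Matrix.det M := by
  simp only [Matrix.det_fin_two, Matrix.add_apply, Matrix.one_apply, Matrix.mul_apply,
    Matrix.conjTranspose_apply, Fin.sum_univ_two, Fin.isValue, reduceIte, star_sub, star_mul',
    show ((0:Fin 2) ≠ 1) by decide, show ((1:Fin 2) ≠ 0) by decide]
  ring

lemma re_star_mul_self_nonneg (z : ℂ) : 0 ≤ (star z * z).re := by
  simp [Complex.mul_re, Complex.star_def]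
  nlinarith [sq_nonneg z.re, sq_nonneg z.im]

lemma one_le_det2 (M : Matrix (Fin 2) (Fin 2) ℂ) :
    1 ≤ (Matrix.det (1 + M.conjTranspose * M)).re := by
  rw [det2C]
  simp only [Complex.add_re, Complex.one_re, Complex.re_sum, Fin.sum_univ_two]
  have h := re_star_mul_self_nonneg (M.det)
  have h00 := re_star_mul_self_nonneg (M 0 0)
  have h01 := re_star_mul_self_nonneg (M 0 1)
  have h10 := re_star_mul_self_nonneg (M 1 0)
  have h11 := re_star_mul_self_nonneg (M 1 1)
  linarith


lemma det3C (H : Matrix (Fin 3) (Fin 2) ℂ) :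
    Matrix.det (1 + H.conjTranspose * H)
    = 1 + (∑ i : Fin 3, ∑ j : Fin 2, star (H i j) * H i j)
      + star (Matrix.det (H.submatrix ![0,1] id)) * Matrix.det (H.submatrix ![0,1] id)
      + star (Matrix.det (H.submatrix ![0,2] id)) * Matrix.det (H.submatrix ![0,2] id)
      + star (Matrix.det (H.submatrix ![1,2] id)) * Matrix.det (H.submatrix ![1,2] id) := by
  simp only [Matrix.det_fin_two, Matrix.add_apply, Matrix.one_apply, Matrix.mul_apply,
    Matrix.conjTranspose_apply, Matrix.submatrix_apply, Fin.sum_univ_three, Fin.sum_univ_two,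
    id_eq, Matrix.cons_val_zero, Matrix.cons_val_one, Matrix.head_cons, Fin.isValue, reduceIte,
    star_sub, star_mul',
    show ((0:Fin 2) ≠ 1) by decide, show ((1:Fin 2) ≠ 0) by decide]
  ring

lemma one_le_det3 (H : Matrix (Fin 3) (Fin 2) ℂ) :
    1 ≤ (Matrix.det (1 + H.conjTranspose * H)).re := by
  rw [det3C]
  simp only [Complex.add_re, Complex.one_re, Complex.re_sum, Fin.sum_univ_three, Fin.sum_univ_two]
  have ha := re_star_mul_self_nonneg (Matrix.det (H.submatrix ![0,1] id))
  have hb := re_star_mul_self_nonneg (Matrix.det (H.submatrix ![0,2] id))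
  have hc := re_star_mul_self_nonneg (Matrix.det (H.submatrix ![1,2] id))
  have h00 := re_star_mul_self_nonneg (H 0 0)
  have h01 := re_star_mul_self_nonneg (H 0 1)
  have h10 := re_star_mul_self_nonneg (H 1 0)
  have h11 := re_star_mul_self_nonneg (H 1 1)
  have h20 := re_star_mul_self_nonneg (H 2 0)
  have h21 := re_star_mul_self_nonneg (H 2 1)
  linarith

lemma sub_eq (H : Matrix (Fin 3) (Fin 2) ℂ) (T : Finset (Fin 3)) [DecidableEq {x : Fin 3 // x ∈ T}]
    (g : Fin 2 → Fin 3) (e : Fin 2 ≃ {x : Fin 3 // x ∈ T}) (he : ∀ i, ((e i : Fin 3)) = g i) :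
    mimoCap (H.submatrix (fun j : {x : Fin 3 // x ∈ T} => (j : Fin 3)) id)
      = mimoCap (H.submatrix g id) := by
  rw [← mimoCap_reindex (H.submatrix (fun j : {x : Fin 3 // x ∈ T} => (j : Fin 3)) id) e]
  congr 1
  ext i j
  simp [Matrix.submatrix_apply, he]

lemma core_le (H : Matrix (Fin 3) (Fin 2) ℂ) :
    (Matrix.det (1 + H.conjTranspose * H)).re ≤
      (Matrix.det (1 + (H.submatrix ![0,1] id).conjTranspose * (H.submatrix ![0,1] id))).re
      + (Matrix.det (1 + (H.submatrix ![0,2] id).conjTranspose * (H.submatrix ![0,2] id))).re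
      + (Matrix.det (1 + (H.submatrix ![1,2] id).conjTranspose * (H.submatrix ![1,2] id))).re := by
  have h := congrArg Complex.re (coreC H)
  simp only [Complex.add_re, Complex.re_sum, Fin.sum_univ_three, Fin.sum_univ_two, Complex.re_ofNat] at h
  have hs : ∀ i j, 0 ≤ (star (H i j) * H i j).re := fun i j => re_star_mul_self_nonneg _
  have h00 := hs 0 0; have h01 := hs 0 1; have h10 := hs 1 0
  have h11 := hs 1 1; have h20 := hs 2 0; have h21 := hs 2 1
  linarith

/-- Receiver-selection bound for a 2-transmitter, 3-receiver MIMO channel: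
`log₂ det(I₃ + H Hᴴ) ≤ max_T log₂ det(I₂ + H_T H_Tᴴ) + log₂ 3`, the maximum ranging
over 2-element subsets `T` of the rows. -/
theorem mimo_3x2_best_rows (H : Matrix (Fin 3) (Fin 2) ℂ) :
    mimoCap H ≤
      (Finset.univ.filter (fun T : Finset (Fin 3) => T.card = 2)).sup'
          ⟨{0, 1}, by decide⟩
          (fun T => mimoCap (H.submatrix
            (fun j : {x : Fin 3 // x ∈ T} => (j : Fin 3)) id))
        + Real.logb 2 3 := by
  -- notation
  set S := (Finset.univ.filter (fun T : Finset (Fin 3) => T.card = 2)) with hS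
  set f := (fun T : Finset (Fin 3) => mimoCap (H.submatrix
      (fun j : {x : Fin 3 // x ∈ T} => (j : Fin 3)) id)) with hf
  -- the three 2-row matrices
  set M01 := H.submatrix ![0,1] id with hM01
  set M02 := H.submatrix ![0,2] id with hM02
  set M12 := H.submatrix ![1,2] id with hM12
  set D := (Matrix.det (1 + H.conjTranspose * H)).re with hD
  set D01 := (Matrix.det (1 + M01.conjTranspose * M01)).re with hD01
  set D02 := (Matrix.det (1 + M02.conjTranspose * M02)).re with hD02
  set D12 := (Matrix.det (1 + M12.conjTranspose * M12)).re with hD12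
  have hDle : D ≤ D01 + D02 + D12 := core_le H
  have h1 : (1:ℝ) ≤ D01 := one_le_det2 M01
  have h2 : (1:ℝ) ≤ D02 := one_le_det2 M02
  have h3 : (1:ℝ) ≤ D12 := one_le_det2 M12
  -- mimoCap H = logb 2 D
  have hcap : mimoCap H = Real.logb 2 D := by
    unfold mimoCap
    rw [hD, Matrix.det_one_add_mul_comm]
  -- mimoCap of each 2-row matrix
  have hcap2 : ∀ M : Matrix (Fin 2) (Fin 2) ℂ,
      mimoCap M = Real.logb 2 (Matrix.det (1 + M.conjTranspose * M)).re := by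
    intro M; unfold mimoCap; rw [Matrix.det_one_add_mul_comm]
  -- find the best T
  have mk : ∀ (v : Fin 2 → Fin 3) (T : Finset (Fin 3)) (e : Fin 2 ≃ {x : Fin 3 // x ∈ T}),
      (∀ i, ((e i : Fin 3)) = v i) → f T = mimoCap (H.submatrix v id) := by
    intro v T e he
    rw [hf]
    exact sub_eq H T v e he
  obtain ⟨g, DT, T, hg3, hTD, hcapT, hTmem, hfT⟩ :
      ∃ (g : Fin 2 → Fin 3) (DT : ℝ) (T : Finset (Fin 3)), D ≤ 3 * DT ∧ (1:ℝ) ≤ DT ∧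
        Real.logb 2 DT = mimoCap (H.submatrix g id) ∧ T ∈ S ∧
        f T = mimoCap (H.submatrix g id) := by
    have e01 := mk ![0,1] {0,1}
      (Equiv.ofBijective (fun i => ⟨![0,1] i, by fin_cases i <;> decide⟩) (by decide))
      (fun i => by fin_cases i <;> rfl)
    have e02 := mk ![0,2] {0,2}
      (Equiv.ofBijective (fun i => ⟨![0,2] i, by fin_cases i <;> decide⟩) (by decide))
      (fun i => by fin_cases i <;> rfl)
    have e12 := mk ![1,2] {1,2}
      (Equiv.ofBijective (fun i => ⟨![1,2] i, by fin_cases i <;> decide⟩) (by decide))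
      (fun i => by fin_cases i <;> rfl)
    rcases le_total D01 D02 with h12 | h12
    · rcases le_total D02 D12 with h23 | h23
      · exact ⟨![1,2], D12, {1,2}, by linarith, by linarith,
          by rw [hcap2, hD12, hM12], by rw [hS]; decide, e12⟩
      · exact ⟨![0,2], D02, {0,2}, by linarith, by linarith,
          by rw [hcap2, hD02, hM02], by rw [hS]; decide, e02⟩
    · rcases le_total D01 D12 with h13 | h13
      · exact ⟨![1,2], D12, {1,2}, by linarith, by linarith,
          by rw [hcap2, hD12, hM12], by rw [hS]; decide, e12⟩
      · exact ⟨![0,1], D01, {0,1}, by linarith, by linarith,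
          by rw [hcap2, hD01, hM01], by rw [hS]; decide, e01⟩
  -- positivity
  have hDpos : (0:ℝ) < D := lt_of_lt_of_le one_pos (one_le_det3 H)
  have hDTpos : (0:ℝ) < DT := lt_of_lt_of_le one_pos hTD
  -- find the finset T corresponding to g
  calc mimoCap H = Real.logb 2 D := hcap
    _ ≤ Real.logb 2 (3 * DT) :=
        Real.logb_le_logb_of_le one_lt_two hDpos hg3
    _ = Real.logb 2 3 + Real.logb 2 DT := Real.logb_mul (by norm_num) (ne_of_gt hDTpos)
    _ ≤ Real.logb 2 3 + S.sup' ⟨{0, 1}, by decide⟩ f := by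
        have : Real.logb 2 DT ≤ S.sup' ⟨{0, 1}, by decide⟩ f := by
          rw [hcapT, ← hfT]
          exact Finset.le_sup' f hTmem
        linarith
    _ = S.sup' ⟨{0, 1}, by decide⟩ f + Real.logb 2 3 := by ring
end
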